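/- arXiv:2001.10631 — 7 statements merged into one kernel-verified Lean document; each statement's English description precedes it below -/
import Mathlib

section
/- For all x in the open interval (0,1), (1-x) · (2/(x(1-x)))^{x²/2} ≤ 1. -/
theorem one_sub_mul_rpow_le_one (x : ℝ) (h0 : 0 < x) (h1 : x < 1) :
    (1 - x) * (2 / (x * (1 - x))) ^ (x ^ 2 / 2 : ℝ) ≤ 1 := by
  have hx1 : (0:ℝ) < 1 - x := by linarith
  set s : ℝ := x ^ 2 / 2 with hs
  have hs0 : 0 ≤ s := by positivity
  have hs1 : s ≤ 1 := by nlinarith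
  have hrw : (1 - x) * (2 / (x * (1 - x))) ^ s
      = (1 - x) ^ (1 - s) * (2 / x) ^ s := by
    have h2 : 2 / (x * (1 - x)) = (2 / x) * (1 - x)⁻¹ := by
      field_simp
    rw [h2, Real.mul_rpow (by positivity) (by positivity),
      Real.inv_rpow hx1.le, Real.rpow_sub hx1, Real.rpow_one]
    field_simp
  rw [hrw]
  have hgm := Real.geom_mean_le_arith_mean2_weighted (by linarith : (0:ℝ) ≤ 1 - s)
    hs0 hx1.le (by positivity : (0:ℝ) ≤ 2 / x) (by ring)
  refine hgm.trans ?_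
  rw [hs]
  have hx : x ≠ 0 := ne_of_gt h0
  have h : x ^ 2 / 2 * (2 / x) = x := by field_simp
  rw [h]
  nlinarith
end

section
/- Let Y be a sub-exponential random variable with E|Y| ≤ 2 and ψ₁-norm at most K² where K ≥ 6/5. Then for every p ≥ 1, E|Y|^p ≤ C^p p^p (K² log K)^{p-1}, where C ≤ 6 is an absolute constant. -/
/-!
Split `|Y| ^ p` at the level `M = 6 p K² log K`: below `M` it is at most `M ^ (p - 1) |Y|`, and
above `M` the convexity bound `(x / M) ^ p ≤ exp (p (x / M - 1))` dominates it by
`M ^ p exp (-M / K²) exp (|Y| / K²)`, since `p K² ≤ M`. The two pieces integrate to at most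
`2 M ^ (p - 1)` and `2 M ^ p exp (-M / K²)`, and `exp (-M / K²) = K ^ (-6p)` makes the second
negligible against the first.
-/

open MeasureTheory ProbabilityTheory

/-- The ψ_α (Orlicz) norm of a real random variable, with the convention `sInf ∅ = ∞`. -/
noncomputable def psiNorm {Ω : Type*} [MeasurableSpace Ω] (μ : Measure Ω) (α : ℝ)
    (X : Ω → ℝ) : ENNReal :=
  sInf {t : ENNReal | ∃ s : ℝ, 0 < s ∧ t = ENNReal.ofReal s ∧
    (∫⁻ ω, ENNReal.ofReal (Real.exp (|X ω| ^ α / s ^ α)) ∂μ) ≤ 2}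

open Filter Topology

section Orlicz

variable {Ω : Type*} [MeasurableSpace Ω] {μ : Measure Ω} {Y : Ω → ℝ} {t : ℝ}

lemma lintegral_exp_abs_div_le_two_of_psiNorm_lt (ht : 0 < t)
    (h : psiNorm μ 1 Y < ENNReal.ofReal t) :
    ∫⁻ ω, ENNReal.ofReal (Real.exp (|Y ω| / t)) ∂μ ≤ 2 := by
  obtain ⟨_, ⟨s, hs, rfl, hint⟩, hst⟩ := sInf_lt_iff.mp h
  rw [ENNReal.ofReal_lt_ofReal_iff ht] at hst
  simp only [Real.rpow_one] at hint
  refine le_trans (lintegral_mono fun ω => ?_) hint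
  gcongr

/-- The infimum defining `psiNorm` is attained: let the scale decrease to `t` and use monotone
convergence. -/
lemma lintegral_exp_abs_div_le_two_of_psiNorm_le (hY : Measurable Y) (ht : 0 < t)
    (h : psiNorm μ 1 Y ≤ ENNReal.ofReal t) :
    ∫⁻ ω, ENNReal.ofReal (Real.exp (|Y ω| / t)) ∂μ ≤ 2 := by
  set s : ℕ → ℝ := fun n => t + 1 / ((n : ℝ) + 1)
  have hs_pos (n : ℕ) : 0 < s n := by positivity
  have hs_anti : Antitone s := fun m n hmn => by
    simp only [s]; gcongr
  have hs_lim : Tendsto s atTop (𝓝 t) := by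
    simpa [s] using (tendsto_one_div_add_atTop_nhds_zero_nat (𝕜 := ℝ)).const_add t
  refine le_of_tendsto' (lintegral_tendsto_of_tendsto_of_monotone (fun n => ?_)
    (ae_of_all _ fun ω m n hmn => ?_) (ae_of_all _ fun ω => ?_)) fun n =>
    lintegral_exp_abs_div_le_two_of_psiNorm_lt (hs_pos n)
      (h.trans_lt ((ENNReal.ofReal_lt_ofReal_iff (hs_pos n)).mpr (by simp [s]; positivity)))
  · fun_prop
  · dsimp only
    gcongr
    exact hs_anti hmn
  · exact (ENNReal.continuous_ofReal.comp Real.continuous_exp).continuousAt.tendsto.comp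
      (tendsto_const_nhds.div hs_lim ht.ne')

end Orlicz

/-- Below `M` use `x ^ (p - 1) ≤ M ^ (p - 1)`; above `M` use `(x / M) ^ p ≤ exp (p (x / M - 1))`
together with `p / M ≤ 1 / t`. -/
lemma rpow_le_mul_add_mul_exp {p M t x : ℝ} (hp : 1 ≤ p) (hM : 0 < M) (ht : 0 < t)
    (hpt : p * t ≤ M) (hx : 0 ≤ x) :
    x ^ p ≤ M ^ (p - 1) * x + M ^ p * Real.exp (-M / t) * Real.exp (x / t) := by
  have hsplit : x ^ p = x ^ (p - 1) * x := by
    conv_lhs => rw [← sub_add_cancel p 1, Real.rpow_add' hx (by linarith), Real.rpow_one]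
  rcases le_or_gt x M with hxM | hMx
  · have hsmall : x ^ (p - 1) * x ≤ M ^ (p - 1) * x := by gcongr
    have : 0 ≤ M ^ p * Real.exp (-M / t) * Real.exp (x / t) := by positivity
    linarith
  · have hexp : (x / M) ^ p ≤ Real.exp ((x - M) / t) := calc
      (x / M) ^ p ≤ Real.exp (x / M - 1) ^ p := by
        gcongr; linarith [Real.add_one_le_exp (x / M - 1)]
      _ = Real.exp ((x - M) * (p / M)) := by
        rw [← Real.exp_mul]; congr 1; field_simp
      _ ≤ Real.exp ((x - M) / t) := by
        rw [div_eq_mul_one_div (x - M) t]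
        gcongr Real.exp ((x - M) * ?_)
        rw [div_le_div_iff₀ hM ht]; linarith
    have hlarge : x ^ p ≤ M ^ p * Real.exp (-M / t) * Real.exp (x / t) := by
      rw [mul_assoc, ← Real.exp_add, show -M / t + x / t = (x - M) / t by ring,
        ← div_le_iff₀' (by positivity), ← Real.div_rpow hx hM.le]
      exact hexp
    have : 0 ≤ M ^ (p - 1) * x := by positivity
    linarith

lemma lintegral_rpow_abs_le {Ω : Type*} [MeasurableSpace Ω] {μ : Measure Ω} {Y : Ω → ℝ}
    {p M t : ℝ} (hY : Measurable Y) (hp : 1 ≤ p) (hM : 0 < M) (ht : 0 < t) (hpt : p * t ≤ M) :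
    ∫⁻ ω, ENNReal.ofReal (|Y ω| ^ p) ∂μ ≤
      ENNReal.ofReal (M ^ (p - 1)) * ∫⁻ ω, ENNReal.ofReal |Y ω| ∂μ +
        ENNReal.ofReal (M ^ p * Real.exp (-M / t)) *
          ∫⁻ ω, ENNReal.ofReal (Real.exp (|Y ω| / t)) ∂μ := by
  have hmeas : Measurable fun ω => ENNReal.ofReal |Y ω| := by fun_prop
  rw [← lintegral_const_mul _ hmeas, ← lintegral_const_mul _ (by fun_prop),
    ← lintegral_add_left (hmeas.const_mul _)]
  refine lintegral_mono fun ω => ?_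
  rw [← ENNReal.ofReal_mul (by positivity), ← ENNReal.ofReal_mul (by positivity),
    ← ENNReal.ofReal_add (by positivity) (by positivity)]
  exact ENNReal.ofReal_le_ofReal (rpow_le_mul_add_mul_exp hp hM ht hpt (abs_nonneg _))

lemma one_sixth_le_log {K : ℝ} (hK : 6 / 5 ≤ K) : 1 / 6 ≤ Real.log K := by
  have hinv : K⁻¹ ≤ 5 / 6 := by
    rw [inv_le_comm₀ (by linarith) (by norm_num)]; linarith
  linarith [Real.one_sub_inv_le_log_of_pos (show 0 < K by linarith)]

/-- With `M = 6 p K² log K`, the factor `exp (-M / K²) = K ^ (-6p)` beats the `K²` inside `M`. -/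
lemma mul_exp_neg_div_sq_le {K p : ℝ} (hK : 6 / 5 ≤ K) (hp : 1 ≤ p) :
    6 * p * (K ^ 2 * Real.log K) * Real.exp (-(6 * p * (K ^ 2 * Real.log K)) / K ^ 2) ≤
      3 / 2 * p := by
  set ℓ := Real.log K
  have hℓ : 0 ≤ ℓ := by linarith [one_sixth_le_log hK]
  have hK2 : K ^ 2 = Real.exp (2 * ℓ) := by
    rw [mul_comm, Real.exp_mul, Real.exp_log (by linarith)]; norm_cast
  have hdecay : K ^ 2 * Real.exp (-(6 * p * (K ^ 2 * ℓ)) / K ^ 2) ≤ Real.exp (-(4 * ℓ)) := by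
    rw [show -(6 * p * (K ^ 2 * ℓ)) / K ^ 2 = -(6 * p * ℓ) by field_simp, hK2, ← Real.exp_add]
    gcongr
    nlinarith
  have hbump : 4 * ℓ * Real.exp (-(4 * ℓ)) ≤ 1 :=
    (Real.mul_exp_neg_le_exp_neg_one _).trans (by simp)
  calc 6 * p * (K ^ 2 * ℓ) * Real.exp (-(6 * p * (K ^ 2 * ℓ)) / K ^ 2)
      = 6 * p * ℓ * (K ^ 2 * Real.exp (-(6 * p * (K ^ 2 * ℓ)) / K ^ 2)) := by ring
    _ ≤ 6 * p * ℓ * Real.exp (-(4 * ℓ)) := by gcongr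
    _ ≤ 3 / 2 * p := by nlinarith

lemma subexponential_moment_majorant_le {K p : ℝ} (hK : 6 / 5 ≤ K) (hp : 1 ≤ p) :
    (6 * p * (K ^ 2 * Real.log K)) ^ (p - 1) * 2 +
        (6 * p * (K ^ 2 * Real.log K)) ^ p *
          Real.exp (-(6 * p * (K ^ 2 * Real.log K)) / K ^ 2) * 2 ≤
      6 ^ p * p ^ p * (K ^ 2 * Real.log K) ^ (p - 1) := by
  set L := K ^ 2 * Real.log K
  have hL : 0 < L := by have := one_sixth_le_log hK; positivity
  set M := 6 * p * L
  have hM : 0 < M := by positivity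
  have hMp : M ^ p = M ^ (p - 1) * M := by
    rw [Real.rpow_sub_one hM.ne', div_mul_cancel₀ _ hM.ne']
  have htarget : 6 ^ p * p ^ p * L ^ (p - 1) = M ^ (p - 1) * (6 * p) := by
    have h6p : 0 < 6 * p := by positivity
    rw [← Real.mul_rpow (by norm_num) (by linarith), Real.mul_rpow h6p.le hL.le,
      Real.rpow_sub_one h6p.ne']
    field_simp
  have hscalar : 2 + 2 * (M * Real.exp (-M / K ^ 2)) ≤ 6 * p := by
    linarith [mul_exp_neg_div_sq_le hK hp]
  rw [htarget, hMp]
  nlinarith [mul_le_mul_of_nonneg_left hscalar (by positivity : 0 ≤ M ^ (p - 1))]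

theorem moment_bound_subexponential : ∃ C : ℝ, 0 < C ∧ C ≤ 6 ∧
    ∀ (Ω : Type) (_ : MeasurableSpace Ω) (μ : Measure Ω) (_ : IsProbabilityMeasure μ)
      (Y : Ω → ℝ) (K : ℝ), Measurable Y → (6 / 5 : ℝ) ≤ K →
      (∫⁻ ω, ENNReal.ofReal |Y ω| ∂μ) ≤ 2 →
      psiNorm μ 1 Y ≤ ENNReal.ofReal (K ^ 2) →
      ∀ p : ℝ, 1 ≤ p →
        (∫⁻ ω, ENNReal.ofReal (|Y ω| ^ p) ∂μ) ≤
          ENNReal.ofReal (C ^ p * p ^ p * (K ^ 2 * Real.log K) ^ (p - 1)) := by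
  refine ⟨6, by norm_num, le_rfl, ?_⟩
  intro Ω _ μ _ Y K hY hK hmean hψ p hp
  have hK2 : 0 < K ^ 2 := by positivity
  have hlog := one_sixth_le_log hK
  set M := 6 * p * (K ^ 2 * Real.log K)
  have hM : 0 < M := by positivity
  have hpt : p * K ^ 2 ≤ M := by nlinarith
  calc ∫⁻ ω, ENNReal.ofReal (|Y ω| ^ p) ∂μ
      ≤ ENNReal.ofReal (M ^ (p - 1)) * 2 + ENNReal.ofReal (M ^ p * Real.exp (-M / K ^ 2)) * 2 :=
        (lintegral_rpow_abs_le hY hp hM hK2 hpt).trans <| by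
          gcongr
          exact lintegral_exp_abs_div_le_two_of_psiNorm_le hY hK2 hψ
    _ = ENNReal.ofReal (M ^ (p - 1) * 2 + M ^ p * Real.exp (-M / K ^ 2) * 2) := by
        rw [ENNReal.ofReal_add (by positivity) (by positivity),
          ENNReal.ofReal_mul (by positivity : 0 ≤ M ^ (p - 1)),
          ENNReal.ofReal_mul (by positivity : 0 ≤ M ^ p * Real.exp (-M / K ^ 2)),
          ENNReal.ofReal_ofNat]
    _ ≤ _ := ENNReal.ofReal_le_ofReal (subexponential_moment_majorant_le hK hp)
end

section
/- Let Y be a random variable with E Y = 0, E|Y| ≤ 2 and ‖Y‖_{ψ₁} ≤ K² where K ≥ 6/5. Then there exist absolute constants C₀, c₀ > 0 such that E exp(λY) ≤ exp(C₀ λ² K² log K) whenever |λ| K² log K ≤ c₀. -/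
open MeasureTheory ProbabilityTheory

lemma exp_le_quad (x : ℝ) : Real.exp x ≤ 1 + x + x^2 * Real.exp |x| := by
  rcases le_or_gt 0 x with hx | hx
  · rw [abs_of_nonneg hx]
    have h1 : x + 1 ≤ Real.exp x := Real.add_one_le_exp x
    have h2 : Real.exp (-x) * Real.exp x = 1 := by rw [← Real.exp_add]; simp
    have h3 : -x + 1 ≤ Real.exp (-x) := Real.add_one_le_exp (-x)
    nlinarith [Real.exp_pos x, Real.exp_pos (-x), sq_nonneg x, mul_nonneg hx (sub_nonneg.mpr h1)]
  · rw [abs_of_neg hx]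
    have h2 : Real.exp x * Real.exp (-x) = 1 := by rw [← Real.exp_add]; simp
    have h3 : -x + 1 ≤ Real.exp (-x) := Real.add_one_le_exp (-x)
    have h4 : (1:ℝ) ≤ Real.exp (-x) := by nlinarith
    have h5 : Real.exp x * (1 - x) ≤ 1 := by nlinarith [Real.exp_pos x]
    have h0 : (0:ℝ) < 1 - x := by linarith
    have h6 : Real.exp x ≤ 1 + x + x^2 := by
      nlinarith [h5, h0, mul_nonneg (mul_nonneg (neg_nonneg.mpr hx.le) (neg_nonneg.mpr hx.le)) (neg_nonneg.mpr hx.le)]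
    nlinarith [mul_nonneg (sq_nonneg x) (sub_nonneg.mpr h4)]

lemma sq_le_exp' {t : ℝ} (ht : 0 ≤ t) : t^2 ≤ 4 * Real.exp t := by
  have h2 : Real.exp (t/2) * Real.exp (t/2) = Real.exp t := by rw [← Real.exp_add]; ring_nf
  have h1 : t/2 + 1 ≤ Real.exp (t/2) := Real.add_one_le_exp _
  nlinarith [Real.exp_pos (t/2)]

lemma exp_sixth : Real.exp (1/6 : ℝ) ≤ 6/5 := by
  by_contra h
  push_neg at h
  have h6 : Real.exp (1/6 : ℝ) ^ 6 = Real.exp 1 := by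
    rw [← Real.exp_nat_mul]; norm_num
  have := pow_lt_pow_left₀ h (by norm_num : (0:ℝ) ≤ 6/5) (by norm_num : 6 ≠ 0)
  rw [h6] at this
  have h9 := Real.exp_one_lt_d9
  norm_num at this
  linarith

lemma key_bound (a M lam z : ℝ) (ha0 : 0 < a) (hM_def : M = 4*a*Real.log a)
    (hM0 : 0 < M) (hlam0 : 0 ≤ lam) (hlM : lam * M ≤ 1) (hl4a : lam * (4*a) ≤ 1)
    (hz0 : 0 ≤ z) :
    z^2 * Real.exp (lam * z) ≤ 3*M*z + 64*Real.exp (z/a) := by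
  have hexp1 : Real.exp 1 ≤ 2.7182818286 := le_of_lt Real.exp_one_lt_d9
  rcases le_or_gt z M with hcase | hcase
  · have e1 : Real.exp (lam * z) ≤ Real.exp 1 := by
      apply Real.exp_le_exp.mpr
      calc lam * z ≤ lam * M := mul_le_mul_of_nonneg_left hcase hlam0
        _ ≤ 1 := hlM
    have p1 : 0 ≤ (M - z) * z * Real.exp (lam * z) :=
      mul_nonneg (mul_nonneg (sub_nonneg.mpr hcase) hz0) (Real.exp_pos _).le
    have p2 : 0 ≤ M * z * (Real.exp 1 - Real.exp (lam * z)) :=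
      mul_nonneg (mul_nonneg hM0.le hz0) (sub_nonneg.mpr e1)
    have h2 : (0:ℝ) ≤ 64 * Real.exp (z/a) := by positivity
    nlinarith [p1, p2, h2]
  · have hli : lam ≤ 1/(4*a) := by
      rw [le_div_iff₀ (by positivity)]; exact hl4a
    have hq := sq_le_exp' (t := z/(4*a)) (by positivity)
    have h1 : z^2 ≤ 64*a^2*Real.exp (z/(4*a)) := by
      rw [div_pow] at hq
      calc z^2 = (z^2/(4*a)^2) * ((4*a)^2) := by field_simp
        _ ≤ 4*Real.exp (z/(4*a)) * ((4*a)^2) :=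
            mul_le_mul_of_nonneg_right hq (by positivity)
        _ = 64*a^2*Real.exp (z/(4*a)) := by ring
    have h2 : Real.exp (lam * z) ≤ Real.exp (z/(4*a)) := by
      apply Real.exp_le_exp.mpr
      calc lam * z ≤ (1/(4*a))*z := mul_le_mul_of_nonneg_right hli hz0
        _ = z/(4*a) := by ring
    have h3 : z^2*Real.exp (lam * z) ≤ (64*a^2*Real.exp (z/(4*a)))*Real.exp (z/(4*a)) :=
      mul_le_mul h1 h2 (Real.exp_pos _).le (by positivity)
    have h4 : Real.exp (z/(4*a))*Real.exp (z/(4*a)) = Real.exp (z/(2*a)) := by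
      rw [← Real.exp_add]; ring_nf
    have haexp : a^2 ≤ Real.exp (z/(2*a)) := by
      have hla : Real.exp (2*Real.log a) = a^2 := by
        rw [two_mul, Real.exp_add, Real.exp_log ha0]; ring
      have hz2 : 2*Real.log a ≤ z/(2*a) := by
        rw [le_div_iff₀ (by positivity)]
        calc 2*Real.log a * (2*a) = M := by rw [hM_def]; ring
          _ ≤ z := hcase.le
      calc a^2 = Real.exp (2*Real.log a) := hla.symm
        _ ≤ Real.exp (z/(2*a)) := Real.exp_le_exp.mpr hz2
    have h5 : a^2 * Real.exp (z/(2*a)) ≤ Real.exp (z/a) := by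
      have hsplit : Real.exp (z/a) = Real.exp (z/(2*a)) * Real.exp (z/(2*a)) := by
        rw [← Real.exp_add]; ring_nf
      nlinarith [Real.exp_pos (z/(2*a))]
    have h6 : (0:ℝ) ≤ 3*M*z := by positivity
    calc z^2 * Real.exp (lam * z) ≤ (64*a^2*Real.exp (z/(4*a)))*Real.exp (z/(4*a)) := h3
      _ = 64*(a^2*Real.exp (z/(2*a))) := by rw [mul_assoc, h4]; ring
      _ ≤ 64*Real.exp (z/a) := by linarith
      _ ≤ 3*M*z + 64*Real.exp (z/a) := by linarith

set_option maxHeartbeats 1000000 in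
theorem mgf_bound_subexponential : ∃ C₀ c₀ : ℝ, 0 < C₀ ∧ 0 < c₀ ∧
    ∀ (Ω : Type) (_ : MeasurableSpace Ω) (μ : Measure Ω) (_ : IsProbabilityMeasure μ)
      (Y : Ω → ℝ) (K l : ℝ), Measurable Y → (6 / 5 : ℝ) ≤ K →
      Integrable Y μ → (∫ ω, Y ω ∂μ) = 0 →
      (∫⁻ ω, ENNReal.ofReal |Y ω| ∂μ) ≤ 2 →
      psiNorm μ 1 Y ≤ ENNReal.ofReal (K ^ 2) →
      |l| * (K ^ 2 * Real.log K) ≤ c₀ →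
      (∫⁻ ω, ENNReal.ofReal (Real.exp (l * Y ω)) ∂μ) ≤
        ENNReal.ofReal (Real.exp (C₀ * l ^ 2 * K ^ 2 * Real.log K)) := by
  refine ⟨1000, 1/48, by norm_num, by norm_num, ?_⟩
  intro Ω mΩ μ hμ Y K l hY hK hInt hEY hEabs hpsi hl
  have hK0 : (0:ℝ) < K := by linarith
  have hK2 : (36/25 : ℝ) ≤ K^2 := by nlinarith
  obtain ⟨a, ha_def⟩ : ∃ x : ℝ, x = 2*K^2 := ⟨_, rfl⟩
  have ha0 : (0:ℝ) < a := by rw [ha_def]; positivity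
  have ha : (2.88:ℝ) ≤ a := by rw [ha_def]; nlinarith
  have hexp1 : Real.exp 1 ≤ 2.7182818286 := le_of_lt Real.exp_one_lt_d9
  have hloga : 1 ≤ Real.log a := (Real.le_log_iff_exp_le ha0).mpr (by linarith)
  have hlogK : 1/6 ≤ Real.log K := by
    rw [Real.le_log_iff_exp_le hK0]
    linarith [exp_sixth]
  have hlogK0 : 0 < Real.log K := by linarith
  have hloga6 : Real.log a ≤ 6 * Real.log K := by
    have h2K : (2:ℝ) ≤ K^4 := by nlinarith
    have hsplit : Real.log a = Real.log 2 + 2 * Real.log K := by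
      rw [ha_def, Real.log_mul (by norm_num) (by positivity), Real.log_pow]
      norm_num
    have hl2 : Real.log 2 ≤ Real.log (K^4) := Real.log_le_log (by norm_num) h2K
    rw [Real.log_pow] at hl2
    push_cast at hl2
    linarith
  obtain ⟨M, hM_def⟩ : ∃ x : ℝ, x = 4*a*Real.log a := ⟨_, rfl⟩
  have hM0 : 0 < M := by rw [hM_def]; nlinarith
  have hM48 : M ≤ 48 * (K^2 * Real.log K) := by
    calc M = 4*a*Real.log a := hM_def
      _ ≤ 4*a*(6*Real.log K) := by nlinarith [ha0, hloga6]
      _ = 24*(a*Real.log K) := by ring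
      _ = 48*(K^2*Real.log K) := by rw [ha_def]; ring
  have hlM : |l| * M ≤ 1 := by
    calc |l| * M ≤ |l| * (48 * (K^2 * Real.log K)) :=
          mul_le_mul_of_nonneg_left hM48 (abs_nonneg l)
      _ = 48 * (|l| * (K^2 * Real.log K)) := by ring
      _ ≤ 48 * (1/48) := by linarith
      _ = 1 := by norm_num
  have hM4a : 4*a ≤ M := by rw [hM_def]; nlinarith
  have hl4a : |l| * (4*a) ≤ 1 :=
    le_trans (mul_le_mul_of_nonneg_left hM4a (abs_nonneg l)) hlM
  -- extract witness from psiNorm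
  have hlt : psiNorm μ 1 Y < ENNReal.ofReal a := by
    refine lt_of_le_of_lt hpsi ?_
    rw [ENNReal.ofReal_lt_ofReal_iff ha0, ha_def]
    nlinarith
  unfold psiNorm at hlt
  obtain ⟨t, ⟨s, hs0, rfl, hsI⟩, hts⟩ := sInf_lt_iff.mp hlt
  have hsa : s < a := by rwa [ENNReal.ofReal_lt_ofReal_iff ha0] at hts
  simp only [Real.rpow_one] at hsI
  have Hexp : (∫⁻ ω, ENNReal.ofReal (Real.exp (|Y ω| / a)) ∂μ) ≤ 2 := by
    refine le_trans (lintegral_mono fun ω => ?_) hsI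
    apply ENNReal.ofReal_le_ofReal
    apply Real.exp_le_exp.mpr
    exact div_le_div_of_nonneg_left (abs_nonneg _) hs0 hsa.le
  obtain ⟨E0, hE0_def⟩ : ∃ f : Ω → ℝ, f = fun ω => Real.exp (|Y ω| / a) := ⟨_, rfl⟩
  have hE0m : Measurable E0 := by
    rw [hE0_def]; exact Real.measurable_exp.comp (hY.abs.div_const a)
  have hE0nn : ∀ ω, 0 ≤ E0 ω := by
    intro ω; rw [hE0_def]; exact (Real.exp_pos _).le
  have hE0l : (∫⁻ ω, ENNReal.ofReal (E0 ω) ∂μ) ≤ 2 := by rw [hE0_def]; exact Hexp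
  have hE0i : Integrable E0 μ := by
    refine ⟨hE0m.aestronglyMeasurable, ?_⟩
    rw [hasFiniteIntegral_iff_ofReal (ae_of_all _ hE0nn)]
    exact lt_of_le_of_lt hE0l (by norm_num)
  have toReal2 : ∀ (f : Ω → ℝ), Integrable f μ → (∀ ω, 0 ≤ f ω) →
      (∫⁻ ω, ENNReal.ofReal (f ω) ∂μ) ≤ 2 → ∫ ω, f ω ∂μ ≤ 2 := by
    intro f hfi hfnn hfl
    have h := ofReal_integral_eq_lintegral_ofReal hfi (ae_of_all _ hfnn)
    have h2 : ENNReal.ofReal (∫ ω, f ω ∂μ) ≤ ENNReal.ofReal 2 := by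
      rw [h]; simpa using hfl
    exact (ENNReal.ofReal_le_ofReal_iff (by norm_num)).mp h2
  have hE0I : ∫ ω, E0 ω ∂μ ≤ 2 := toReal2 E0 hE0i hE0nn hE0l
  have habsI : ∫ ω, |Y ω| ∂μ ≤ 2 :=
    toReal2 _ hInt.abs (fun ω => abs_nonneg _) hEabs
  obtain ⟨g, hg_def⟩ : ∃ f : Ω → ℝ, f = fun ω => (Y ω)^2 * Real.exp (|l| * |Y ω|) :=
    ⟨_, rfl⟩
  have key : ∀ z : ℝ, 0 ≤ z →
      z^2 * Real.exp (|l| * z) ≤ 3*M*z + 64*Real.exp (z/a) := fun z hz0 =>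
    key_bound a M |l| z ha0 hM_def hM0 (abs_nonneg l) hlM hl4a hz0
  have hgh : ∀ ω, g ω ≤ 3*M*|Y ω| + 64*E0 ω := by
    intro ω
    have h := key |Y ω| (abs_nonneg _)
    rw [sq_abs] at h
    rw [hg_def, hE0_def]
    exact h
  have hgm : Measurable g := by
    rw [hg_def]
    exact (hY.pow_const 2).mul (Real.measurable_exp.comp (hY.abs.const_mul |l|))
  have hgnn : ∀ ω, 0 ≤ g ω := by
    intro ω; rw [hg_def]; exact mul_nonneg (sq_nonneg _) (Real.exp_pos _).le
  have hhi : Integrable (fun ω => 3*M*|Y ω| + 64*E0 ω) μ :=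
    (hInt.abs.const_mul (3*M)).add (hE0i.const_mul 64)
  have hgi : Integrable g μ := by
    refine Integrable.mono' hhi hgm.aestronglyMeasurable ?_
    filter_upwards with ω
    rw [Real.norm_eq_abs, abs_of_nonneg (hgnn ω)]
    exact hgh ω
  have hgI : ∫ ω, g ω ∂μ ≤ 822 * (K^2 * Real.log K) := by
    have step1 : ∫ ω, g ω ∂μ ≤ ∫ ω, (3*M*|Y ω| + 64*E0 ω) ∂μ :=
      integral_mono hgi hhi hgh
    have step2 : ∫ ω, (3*M*|Y ω| + 64*E0 ω) ∂μ
        = 3*M*(∫ ω, |Y ω| ∂μ) + 64*(∫ ω, E0 ω ∂μ) := by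
      rw [integral_add (hInt.abs.const_mul (3*M)) (hE0i.const_mul 64),
        integral_const_mul, integral_const_mul]
    have hKl : (6/25 : ℝ) ≤ K^2 * Real.log K := by
      calc (6/25 : ℝ) = (36/25)*(1/6) := by norm_num
        _ ≤ K^2 * Real.log K :=
            mul_le_mul hK2 hlogK (by norm_num) (by positivity)
    have hb1 : 3*M*(∫ ω, |Y ω| ∂μ) ≤ 3*M*2 :=
      mul_le_mul_of_nonneg_left habsI (by positivity)
    have hb2 : 64*(∫ ω, E0 ω ∂μ) ≤ 64*2 :=
      mul_le_mul_of_nonneg_left hE0I (by norm_num)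
    have hb3 : 6*M ≤ 288 * (K^2 * Real.log K) := by linarith
    have hb4 : (128:ℝ) ≤ 534 * (K^2 * Real.log K) := by linarith
    linarith
  have hgInn : 0 ≤ ∫ ω, g ω ∂μ := integral_nonneg hgnn
  obtain ⟨f, hf_def⟩ : ∃ f : Ω → ℝ, f = fun ω => 1 + l * Y ω + l^2 * g ω := ⟨_, rfl⟩
  have hfi : Integrable f μ := by
    rw [hf_def]
    exact ((integrable_const 1).add (hInt.const_mul l)).add (hgi.const_mul (l^2))
  have hfpt : ∀ ω, Real.exp (l * Y ω) ≤ f ω := by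
    intro ω
    have h := exp_le_quad (l * Y ω)
    rw [abs_mul, mul_pow] at h
    calc Real.exp (l * Y ω) ≤ 1 + l * Y ω + l^2 * (Y ω)^2 * Real.exp (|l| * |Y ω|) := h
      _ = f ω := by rw [hf_def, hg_def]; ring
  have hfnn : ∀ ω, 0 ≤ f ω := fun ω => le_trans (Real.exp_pos _).le (hfpt ω)
  have hfval : ∫ ω, f ω ∂μ = 1 + l^2 * ∫ ω, g ω ∂μ := by
    have i1 : Integrable (fun ω : Ω => (1:ℝ)) μ := integrable_const 1
    have i2 : Integrable (fun ω => l * Y ω) μ := hInt.const_mul l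
    have i3 : Integrable (fun ω => l^2 * g ω) μ := hgi.const_mul (l^2)
    have i12 : Integrable (fun ω => 1 + l * Y ω) μ := by exact i1.add i2
    rw [hf_def]
    rw [show (fun ω => 1 + l * Y ω + l^2 * g ω) = (fun ω => (1 + l * Y ω) + l^2 * g ω)
        from rfl]
    rw [integral_add i12 i3, integral_add i1 i2,
      integral_const, integral_const_mul, integral_const_mul, hEY]
    simp [measure_univ]
  have hfinal : ∫ ω, f ω ∂μ ≤ Real.exp (1000 * l^2 * K^2 * Real.log K) := by
    rw [hfval]
    have h1 : l^2 * ∫ ω, g ω ∂μ ≤ l^2 * (822 * (K^2 * Real.log K)) :=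
      mul_le_mul_of_nonneg_left hgI (sq_nonneg l)
    have h2 := Real.add_one_le_exp (1000 * l^2 * K^2 * Real.log K)
    have h3 : 0 ≤ l^2 * (K^2 * Real.log K) :=
      mul_nonneg (sq_nonneg l) (by positivity)
    linarith
  calc (∫⁻ ω, ENNReal.ofReal (Real.exp (l * Y ω)) ∂μ)
      ≤ ∫⁻ ω, ENNReal.ofReal (f ω) ∂μ :=
        lintegral_mono fun ω => ENNReal.ofReal_le_ofReal (hfpt ω)
    _ = ENNReal.ofReal (∫ ω, f ω ∂μ) :=
        (ofReal_integral_eq_lintegral_ofReal hfi (ae_of_all _ hfnn)).symm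
    _ ≤ ENNReal.ofReal (Real.exp (1000 * l ^ 2 * K ^ 2 * Real.log K)) :=
        ENNReal.ofReal_le_ofReal hfinal
end

section
/- Let Z be a real random variable with E Z = 0, E Z² = 1 and ‖Z‖_{ψ₂} ≤ K. Let g ~ Normal(0,1) and r be independent of g with r² = (2L)²·Bernoulli((2L)^{-2}), where L² = K² log K. Then there is an absolute constant C such that for all real t, E exp(tZ) ≤ E exp(C t r g). -/
open MeasureTheory ProbabilityTheory

open Real
open scoped ENNReal NNReal

/-!
Let `s ≤ 2K` be a scale with `E exp (Z² / s²) ≤ 2`. Since `E Z = 0`, the bound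
`eˣ ≤ 1 + x + x² e^|x|` gives `E e^{tZ} ≤ 1 + t² E [Z² e^{|tZ|}]`. Truncating at
`Z² = Λ := 4 s² log (4 s²)`, the small values are controlled by `E Z² = 1` and the large ones
by the ψ₂ bound, so `E e^{tZ} ≤ 1 + 4 t² e^{t² Λ / 2}`, and `Λ ≤ 752 L²`.

Conditionally on `r`, the variable `C t r g` is centred Gaussian, so
`E e^{C t r g} = E e^{C² t² r² / 2} = 1 - q + q e^v` with `q = (2L)⁻²` and `v = 2 C² t² L²`.
As `q (e^v - 1) ≥ q v e^{v / 2} = (C² t² / 2) e^{C² t² L²}`, the choice `C = 20` dominates.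
-/

lemma exp_le_one_add_add_sq_mul_exp_abs (x : ℝ) : exp x ≤ 1 + x + x ^ 2 * exp |x| := by
  have key : exp x * (1 - x) ≤ 1 := by
    calc exp x * (1 - x) ≤ exp x * exp (-x) := by gcongr; linarith [add_one_le_exp (-x)]
      _ = 1 := by rw [← exp_add, add_neg_cancel, exp_zero]
  rcases le_total 0 x with hx | hx
  · rw [abs_of_nonneg hx]
    nlinarith [exp_pos x]
  · have : 1 ≤ exp |x| := one_le_exp (abs_nonneg x)
    nlinarith [exp_pos x, sq_nonneg x, mul_nonneg (sq_nonneg x) (sub_nonneg.2 this)]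

lemma two_mul_abs_mul_le (t z : ℝ) {s : ℝ} (hs : 0 < s) :
    2 * |t * z| ≤ t ^ 2 * s + z ^ 2 / s := by
  have h := two_mul_le_add_sq (|t| * √s) (|z| / √s)
  have e : |t| * √s * (|z| / √s) = |t * z| := by
    rw [abs_mul]; field_simp [(sqrt_pos.2 hs).ne']
  rwa [mul_pow, div_pow, sq_abs, sq_abs, sq_sqrt hs.le, mul_assoc, e] at h

lemma sq_mul_exp_abs_mul_le_of_large {s z : ℝ} (hs : 0 < s)
    (hz : 4 * s ^ 2 * log (4 * s ^ 2) ≤ z ^ 2) (t : ℝ) :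
    z ^ 2 * exp |t * z| ≤ exp (t ^ 2 * s ^ 2 / 2) * exp (z ^ 2 / s ^ 2) := by
  set x := z ^ 2 / s ^ 2
  have hzx : z ^ 2 = s ^ 2 * x := by simp only [x]; field_simp
  have htz : |t * z| ≤ t ^ 2 * s ^ 2 / 2 + x / 2 := by
    linarith [two_mul_abs_mul_le t z (by positivity : 0 < s ^ 2)]
  have hx : 4 * s ^ 2 ≤ exp (x / 4) := by
    rw [← exp_log (by positivity : 0 < 4 * s ^ 2)]
    refine exp_le_exp.2 ((le_div_iff₀ (by norm_num)).2 ((le_div_iff₀ (by positivity)).2 ?_))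
    linarith
  calc z ^ 2 * exp |t * z| ≤ s ^ 2 * (4 * exp (x / 4)) * exp (t ^ 2 * s ^ 2 / 2 + x / 2) := by
        rw [hzx]
        gcongr
        linarith [add_one_le_exp (x / 4)]
    _ = 4 * s ^ 2 * exp (x / 4) * exp (t ^ 2 * s ^ 2 / 2 + x / 2) := by ring
    _ ≤ exp (x / 4) * exp (x / 4) * exp (t ^ 2 * s ^ 2 / 2 + x / 2) := by gcongr
    _ = exp (t ^ 2 * s ^ 2 / 2) * exp x := by rw [← exp_add, ← exp_add, ← exp_add]; ring_nf

lemma sq_mul_exp_abs_mul_le {s : ℝ} (hs : 1 ≤ s) (t z : ℝ) :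
    z ^ 2 * exp |t * z| ≤
      exp (t ^ 2 * (4 * s ^ 2 * log (4 * s ^ 2)) / 2) * (2 * z ^ 2 + exp (z ^ 2 / s ^ 2)) := by
  set Λ := 4 * s ^ 2 * log (4 * s ^ 2)
  have hlog : 1 / 4 ≤ log (4 * s ^ 2) := by
    have := one_sub_inv_le_log_of_pos (by positivity : 0 < 4 * s ^ 2)
    have : (4 * s ^ 2)⁻¹ ≤ 1 / 4 := by rw [← one_div]; gcongr; nlinarith
    linarith
  have hsΛ : s ^ 2 ≤ Λ := by nlinarith
  rcases le_total (z ^ 2) Λ with hz | hz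
  · have htz : |t * z| ≤ t ^ 2 * Λ / 2 + 1 / 2 := by
      have := two_mul_abs_mul_le t z (by positivity : 0 < Λ)
      have : z ^ 2 / Λ ≤ 1 := (div_le_one (by positivity)).2 hz
      linarith
    have h2 : exp (1 / 2) ≤ 2 := by
      have := exp_bound_div_one_sub_of_interval' (by norm_num : (0 : ℝ) < 1 / 2) (by norm_num)
      norm_num at this ⊢; linarith
    calc z ^ 2 * exp |t * z| ≤ z ^ 2 * (exp (t ^ 2 * Λ / 2) * exp (1 / 2)) := by
          rw [← exp_add]; gcongr
      _ ≤ z ^ 2 * (exp (t ^ 2 * Λ / 2) * 2) := by gcongr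
      _ ≤ exp (t ^ 2 * Λ / 2) * (2 * z ^ 2 + exp (z ^ 2 / s ^ 2)) := by
          nlinarith [exp_pos (t ^ 2 * Λ / 2), exp_pos (z ^ 2 / s ^ 2), sq_nonneg z]
  · calc z ^ 2 * exp |t * z| ≤ exp (t ^ 2 * s ^ 2 / 2) * exp (z ^ 2 / s ^ 2) :=
          sq_mul_exp_abs_mul_le_of_large (by positivity) hz t
      _ ≤ exp (t ^ 2 * Λ / 2) * exp (z ^ 2 / s ^ 2) := by gcongr
      _ ≤ exp (t ^ 2 * Λ / 2) * (2 * z ^ 2 + exp (z ^ 2 / s ^ 2)) := by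
          gcongr; exact le_add_of_nonneg_left (by positivity)

lemma one_div_sixteen_le_log_of_le_sq_mul_log {K : ℝ} (h : 1 / 4 ≤ K ^ 2 * log K) :
    1 / 16 ≤ log K := by
  by_contra! hlt
  have hlog : 0 < log K := by nlinarith [sq_nonneg K]
  have hK2 : K ^ 2 < 3 := by
    have hKe : |K| < exp (1 / 16) := by
      rw [← exp_log_eq_abs (by rintro rfl; simp at hlog)]; exact exp_lt_exp.2 hlt
    have : exp (1 / 16) ^ 2 < 3 := by
      rw [← exp_nat_mul]
      linarith [exp_le_exp.2 (by norm_num : (2 : ℕ) * (1 / 16 : ℝ) ≤ 1), exp_one_lt_d9]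
    rw [← sq_abs]; nlinarith [abs_nonneg K]
  nlinarith

lemma four_mul_sq_mul_log_le {s K : ℝ} (hs : 1 ≤ s) (hsK : s ≤ 2 * K)
    (hK2 : 1 / 4 ≤ K ^ 2 * log K) :
    4 * s ^ 2 * log (4 * s ^ 2) ≤ 752 * (K ^ 2 * log K) := by
  have hK := one_div_sixteen_le_log_of_le_sq_mul_log hK2
  have hlog : log (4 * s ^ 2) ≤ 47 * log K := calc
    log (4 * s ^ 2) ≤ log (2 ^ 4 * K ^ 2) := log_le_log (by positivity) (by nlinarith)
    _ = 4 * log 2 + 2 * log K := by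
      rw [log_mul (by norm_num) (by nlinarith), log_pow, log_pow]; push_cast; ring
    _ ≤ 47 * log K := by linarith [log_two_lt_d9]
  have : 0 ≤ log (4 * s ^ 2) := log_nonneg (by nlinarith)
  calc 4 * s ^ 2 * log (4 * s ^ 2) ≤ (16 * K ^ 2) * (47 * log K) :=
      mul_le_mul (by nlinarith) hlog this (by positivity)
    _ = 752 * (K ^ 2 * log K) := by ring

lemma mul_exp_half_le_exp_sub_one {v : ℝ} (hv : 0 ≤ v) : v * exp (v / 2) ≤ exp v - 1 := by
  have h := sinh_eq (v / 2) ▸ self_le_sinh_iff.2 (by positivity : 0 ≤ v / 2)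
  have hv2 : exp v = exp (v / 2) * exp (v / 2) := by rw [← exp_add, add_halves]
  have hinv : exp (-(v / 2)) * exp (v / 2) = 1 := by rw [← exp_add, neg_add_cancel, exp_zero]
  nlinarith [exp_pos (v / 2)]

lemma one_add_mul_sq_mul_exp_le {L : ℝ} (hL : L ≠ 0) {M a : ℝ} (hM : M ≤ a ^ 2) (ha : 8 ≤ a ^ 2)
    (t : ℝ) :
    1 + 4 * t ^ 2 * exp (M * t ^ 2 * L ^ 2) ≤
      1 - 1 / (2 * L) ^ 2 + exp ((a * t * (2 * L)) ^ 2 / 2) * (1 / (2 * L) ^ 2) := by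
  set v := (a * t * (2 * L)) ^ 2 / 2
  have hqv : v * (1 / (2 * L) ^ 2) = a ^ 2 * t ^ 2 / 2 := by simp only [v]; field_simp
  have hexp : exp (M * t ^ 2 * L ^ 2) ≤ exp (v / 2) := by
    refine exp_le_exp.2 ?_
    have : v / 2 = a ^ 2 * (t ^ 2 * L ^ 2) := by simp only [v]; ring
    rw [this, mul_assoc]
    exact mul_le_mul_of_nonneg_right hM (by positivity)
  have hq : 0 ≤ 1 / (2 * L) ^ 2 := by positivity
  have key : 4 * t ^ 2 * exp (M * t ^ 2 * L ^ 2) ≤ (exp v - 1) * (1 / (2 * L) ^ 2) := calc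
    4 * t ^ 2 * exp (M * t ^ 2 * L ^ 2) ≤ a ^ 2 * t ^ 2 / 2 * exp (v / 2) := by
      gcongr; nlinarith [sq_nonneg t]
    _ = v * exp (v / 2) * (1 / (2 * L) ^ 2) := by rw [← hqv]; ring
    _ ≤ (exp v - 1) * (1 / (2 * L) ^ 2) :=
      mul_le_mul_of_nonneg_right (mul_exp_half_le_exp_sub_one (by positivity)) hq
  linarith

variable {Ω : Type*} [MeasurableSpace Ω] {μ : Measure Ω}

lemma lintegral_exp_abs_rpow_two (Z : Ω → ℝ) (s : ℝ) :
    ∫⁻ ω, ENNReal.ofReal (exp (|Z ω| ^ (2 : ℝ) / s ^ (2 : ℝ))) ∂μ =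
      ∫⁻ ω, ENNReal.ofReal (exp (Z ω ^ 2 / s ^ 2)) ∂μ := by
  simp only [rpow_two, sq_abs]

lemma one_le_of_lintegral_exp_sq_div_sq_le_two [IsProbabilityMeasure μ] {Z : Ω → ℝ}
    (hsq : ∫ ω, Z ω ^ 2 ∂μ = 1) {s : ℝ} (hs : 0 < s)
    (hb : ∫⁻ ω, ENNReal.ofReal (exp (Z ω ^ 2 / s ^ 2)) ∂μ ≤ 2) : 1 ≤ s := by
  have hZ2 : Integrable (fun ω ↦ Z ω ^ 2 / s ^ 2) μ :=
    (Integrable.of_integral_ne_zero (by simp [hsq])).div_const _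
  have h : ENNReal.ofReal (1 + 1 / s ^ 2) ≤ 2 := calc
    ENNReal.ofReal (1 + 1 / s ^ 2) = ∫⁻ ω, ENNReal.ofReal (1 + Z ω ^ 2 / s ^ 2) ∂μ := by
      have hi : Integrable (fun ω ↦ 1 + Z ω ^ 2 / s ^ 2) μ := (integrable_const 1).add hZ2
      rw [← ofReal_integral_eq_lintegral_ofReal hi (ae_of_all _ fun _ ↦ by positivity),
        integral_add (integrable_const 1) hZ2, integral_div, hsq]
      simp
    _ ≤ ∫⁻ ω, ENNReal.ofReal (exp (Z ω ^ 2 / s ^ 2)) ∂μ :=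
      lintegral_mono fun ω ↦
        ENNReal.ofReal_le_ofReal (by linarith [add_one_le_exp (Z ω ^ 2 / s ^ 2)])
    _ ≤ 2 := hb
  rw [← ENNReal.ofReal_ofNat, ENNReal.ofReal_le_ofReal_iff (by norm_num)] at h
  have : 1 / s ^ 2 ≤ 1 := by linarith
  rw [div_le_one (by positivity)] at this
  nlinarith

lemma one_le_psiNorm_two [IsProbabilityMeasure μ] {Z : Ω → ℝ} (hsq : ∫ ω, Z ω ^ 2 ∂μ = 1) :
    1 ≤ psiNorm μ 2 Z := by
  refine le_sInf ?_
  rintro _ ⟨s, hs, rfl, hb⟩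
  rw [lintegral_exp_abs_rpow_two] at hb
  exact ENNReal.one_le_ofReal.2 (one_le_of_lintegral_exp_sq_div_sq_le_two hsq hs hb)

lemma exists_lintegral_exp_sq_div_sq_le_two_of_psiNorm_lt {Z : Ω → ℝ} {b : ℝ}
    (h : psiNorm μ 2 Z < ENNReal.ofReal b) :
    ∃ s, 0 < s ∧ s < b ∧ ∫⁻ ω, ENNReal.ofReal (exp (Z ω ^ 2 / s ^ 2)) ∂μ ≤ 2 := by
  obtain ⟨_, ⟨s, hs, rfl, hb⟩, hsb⟩ := sInf_lt_iff.1 h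
  rw [lintegral_exp_abs_rpow_two] at hb
  exact ⟨s, hs, (ENNReal.ofReal_lt_ofReal_iff_of_nonneg hs.le).1 hsb, hb⟩

lemma exists_lintegral_exp_sq_div_sq_le_two_of_psiNorm_le [IsProbabilityMeasure μ] {Z : Ω → ℝ}
    (hsq : ∫ ω, Z ω ^ 2 ∂μ = 1) {K : ℝ} (hK : psiNorm μ 2 Z ≤ ENNReal.ofReal K) :
    ∃ s, 1 ≤ s ∧ s ≤ 2 * K ∧ ∫⁻ ω, ENNReal.ofReal (exp (Z ω ^ 2 / s ^ 2)) ∂μ ≤ 2 := by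
  have hK1 : 1 ≤ K := ENNReal.one_le_ofReal.1 ((one_le_psiNorm_two hsq).trans hK)
  obtain ⟨s, hs0, hsK, hb⟩ := exists_lintegral_exp_sq_div_sq_le_two_of_psiNorm_lt
    (hK.trans_lt ((ENNReal.ofReal_lt_ofReal_iff (by linarith)).2 (by linarith : K < 2 * K)))
  exact ⟨s, one_le_of_lintegral_exp_sq_div_sq_le_two hsq hs0 hb, hsK.le, hb⟩

lemma integrable_and_integral_le_of_lintegral_ofReal_le {f : Ω → ℝ} (hf : Measurable f)
    (hf0 : ∀ ω, 0 ≤ f ω) {b : ℝ} (hb0 : 0 ≤ b)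
    (hb : ∫⁻ ω, ENNReal.ofReal (f ω) ∂μ ≤ ENNReal.ofReal b) :
    Integrable f μ ∧ ∫ ω, f ω ∂μ ≤ b := by
  have hfi : Integrable f μ := (lintegral_ofReal_ne_top_iff_integrable hf.aestronglyMeasurable
    (ae_of_all _ hf0)).1 (hb.trans_lt ENNReal.ofReal_lt_top).ne
  rw [← ofReal_integral_eq_lintegral_ofReal hfi (ae_of_all _ hf0),
    ENNReal.ofReal_le_ofReal_iff hb0] at hb
  exact ⟨hfi, hb⟩

lemma integral_sq_mul_exp_abs_mul_le [IsProbabilityMeasure μ] {Z : Ω → ℝ} (hZ : Measurable Z)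
    (hsq : ∫ ω, Z ω ^ 2 ∂μ = 1) {s : ℝ} (hs : 1 ≤ s)
    (hb : ∫⁻ ω, ENNReal.ofReal (exp (Z ω ^ 2 / s ^ 2)) ∂μ ≤ 2) (t : ℝ) :
    Integrable (fun ω ↦ Z ω ^ 2 * exp |t * Z ω|) μ ∧
      ∫ ω, Z ω ^ 2 * exp |t * Z ω| ∂μ ≤ 4 * exp (t ^ 2 * (4 * s ^ 2 * log (4 * s ^ 2)) / 2) := by
  set c := exp (t ^ 2 * (4 * s ^ 2 * log (4 * s ^ 2)) / 2)
  obtain ⟨hEi, hE⟩ := integrable_and_integral_le_of_lintegral_ofReal_le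
    (f := fun ω ↦ exp (Z ω ^ 2 / s ^ 2)) (by fun_prop) (fun _ ↦ (exp_pos _).le) zero_le_two
    (by rwa [ENNReal.ofReal_ofNat])
  have hZ2 : Integrable (fun ω ↦ Z ω ^ 2) μ := Integrable.of_integral_ne_zero (by simp [hsq])
  have hdom : Integrable (fun ω ↦ c * (2 * Z ω ^ 2 + exp (Z ω ^ 2 / s ^ 2))) μ :=
    ((hZ2.const_mul 2).add hEi).const_mul c
  have hW : Integrable (fun ω ↦ Z ω ^ 2 * exp |t * Z ω|) μ := by
    refine hdom.mono' (by fun_prop) (ae_of_all _ fun ω ↦ ?_)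
    rw [norm_of_nonneg (by positivity)]
    exact sq_mul_exp_abs_mul_le hs t (Z ω)
  refine ⟨hW, ?_⟩
  calc ∫ ω, Z ω ^ 2 * exp |t * Z ω| ∂μ
      ≤ ∫ ω, c * (2 * Z ω ^ 2 + exp (Z ω ^ 2 / s ^ 2)) ∂μ :=
        integral_mono hW hdom fun ω ↦ sq_mul_exp_abs_mul_le hs t (Z ω)
    _ = c * (2 + ∫ ω, exp (Z ω ^ 2 / s ^ 2) ∂μ) := by
        rw [integral_const_mul, integral_add (hZ2.const_mul 2) hEi, integral_const_mul, hsq,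
          mul_one]
    _ ≤ 4 * c := by nlinarith [exp_pos (t ^ 2 * (4 * s ^ 2 * log (4 * s ^ 2)) / 2)]

lemma lintegral_exp_mul_le [IsProbabilityMeasure μ] {Z : Ω → ℝ} (hZ : Measurable Z)
    (hZi : Integrable Z μ) (hmean : ∫ ω, Z ω ∂μ = 0) (hsq : ∫ ω, Z ω ^ 2 ∂μ = 1) {s : ℝ}
    (hs : 1 ≤ s) (hb : ∫⁻ ω, ENNReal.ofReal (exp (Z ω ^ 2 / s ^ 2)) ∂μ ≤ 2) (t : ℝ) :
    ∫⁻ ω, ENNReal.ofReal (exp (t * Z ω)) ∂μ ≤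
      ENNReal.ofReal (1 + 4 * t ^ 2 * exp (t ^ 2 * (4 * s ^ 2 * log (4 * s ^ 2)) / 2)) := by
  obtain ⟨hWi, hW⟩ := integral_sq_mul_exp_abs_mul_le hZ hsq hs hb t
  have htaylor (ω : Ω) : exp (t * Z ω) ≤ 1 + t * Z ω + t ^ 2 * (Z ω ^ 2 * exp |t * Z ω|) := by
    have := exp_le_one_add_add_sq_mul_exp_abs (t * Z ω)
    rwa [mul_pow, mul_assoc] at this
  have hlin : Integrable (fun ω ↦ 1 + t * Z ω) μ := (integrable_const 1).add (hZi.const_mul t)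
  have hi : Integrable (fun ω ↦ 1 + t * Z ω + t ^ 2 * (Z ω ^ 2 * exp |t * Z ω|)) μ :=
    hlin.add (hWi.const_mul _)
  calc ∫⁻ ω, ENNReal.ofReal (exp (t * Z ω)) ∂μ
      ≤ ∫⁻ ω, ENNReal.ofReal (1 + t * Z ω + t ^ 2 * (Z ω ^ 2 * exp |t * Z ω|)) ∂μ :=
        lintegral_mono fun ω ↦ ENNReal.ofReal_le_ofReal (htaylor ω)
    _ = ENNReal.ofReal (1 + t ^ 2 * ∫ ω, Z ω ^ 2 * exp |t * Z ω| ∂μ) := by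
        rw [← ofReal_integral_eq_lintegral_ofReal hi
          (ae_of_all _ fun ω ↦ (exp_pos _).le.trans (htaylor ω)),
          integral_add hlin (hWi.const_mul _),
          integral_add (integrable_const 1) (hZi.const_mul t), integral_const_mul,
          integral_const_mul, hmean]
        simp
    _ ≤ _ := ENNReal.ofReal_le_ofReal (by nlinarith [mul_le_mul_of_nonneg_left hW (sq_nonneg t)])

lemma lintegral_exp_mul_gaussianReal (v : ℝ≥0) (a : ℝ) :
    ∫⁻ y, ENNReal.ofReal (exp (a * y)) ∂gaussianReal 0 v =
      ENNReal.ofReal (exp (v * a ^ 2 / 2)) := by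
  rw [← ofReal_integral_eq_lintegral_ofReal (integrable_exp_mul_gaussianReal a)
    (ae_of_all _ fun _ ↦ (exp_pos _).le)]
  have := congrFun (mgf_id_gaussianReal (μ := 0) (v := v)) a
  simp only [mgf, id, zero_mul, zero_add] at this
  rw [this]

lemma lintegral_exp_mul_of_indepFun_gaussianReal [IsFiniteMeasure μ] {X g : Ω → ℝ}
    (hX : Measurable X) (hg : Measurable g) (v : ℝ≥0)
    (hmap : μ.map g = gaussianReal 0 v) (hind : IndepFun X g μ) :
    ∫⁻ ω, ENNReal.ofReal (exp (X ω * g ω)) ∂μ =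
      ∫⁻ ω, ENNReal.ofReal (exp (v * X ω ^ 2 / 2)) ∂μ := by
  have hF : Measurable fun p : ℝ × ℝ ↦ ENNReal.ofReal (exp (p.1 * p.2)) := by fun_prop
  calc ∫⁻ ω, ENNReal.ofReal (exp (X ω * g ω)) ∂μ
      = ∫⁻ p, ENNReal.ofReal (exp (p.1 * p.2)) ∂(μ.map X).prod (μ.map g) := by
        rw [← (indepFun_iff_map_prod_eq_prod_map_map hX.aemeasurable hg.aemeasurable).1 hind,
          lintegral_map hF (hX.prodMk hg)]
    _ = ∫⁻ x, ENNReal.ofReal (exp (v * x ^ 2 / 2)) ∂μ.map X := by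
        rw [lintegral_prod _ hF.aemeasurable, hmap]
        simp_rw [lintegral_exp_mul_gaussianReal]
    _ = ∫⁻ ω, ENNReal.ofReal (exp (v * X ω ^ 2 / 2)) ∂μ := lintegral_map (by fun_prop) hX

lemma le_lintegral_of_le_on_disjoint {A B : Set Ω} (hA : MeasurableSet A) (hB : MeasurableSet B)
    (hAB : Disjoint A B) {f : Ω → ℝ≥0∞} {a b : ℝ≥0∞} (ha : ∀ ω ∈ A, a ≤ f ω)
    (hb : ∀ ω ∈ B, b ≤ f ω) : a * μ A + b * μ B ≤ ∫⁻ ω, f ω ∂μ := calc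
  a * μ A + b * μ B = ∫⁻ _ in A, a ∂μ + ∫⁻ _ in B, b ∂μ := by
    rw [setLIntegral_const, setLIntegral_const]
  _ ≤ ∫⁻ ω in A, f ω ∂μ + ∫⁻ ω in B, f ω ∂μ :=
    add_le_add (setLIntegral_mono' hA ha) (setLIntegral_mono' hB hb)
  _ = ∫⁻ ω in A ∪ B, f ω ∂μ := (lintegral_union hB hAB).symm
  _ ≤ ∫⁻ ω, f ω ∂μ := setLIntegral_le_lintegral _ _

lemma one_le_sq_of_measure_eq_of_measure_eq [IsProbabilityMeasure μ] {r : Ω → ℝ} {c : ℝ}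
    (hc : μ {ω | r ω ^ 2 = c ^ 2} = ENNReal.ofReal (1 / c ^ 2))
    (h0 : μ {ω | r ω = 0} = 1 - ENNReal.ofReal (1 / c ^ 2)) : 1 ≤ c ^ 2 := by
  rcases eq_or_ne c 0 with rfl | hc0
  · -- as `1 / 0 = 0`, the hypotheses say `μ {r = 0} = 0` and `μ {r = 0} = 1`
    simp at hc h0
    simp [hc] at h0
  · have := ENNReal.ofReal_le_one.1 (hc ▸ prob_le_one)
    rwa [div_le_one (by positivity)] at this

lemma le_lintegral_exp_mul_mul_of_indepFun [IsFiniteMeasure μ] {r g : Ω → ℝ} (hr : Measurable r)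
    (hg : Measurable g) (v : ℝ≥0) (hmap : μ.map g = gaussianReal 0 v) (hind : IndepFun r g μ)
    {c : ℝ} (hc : c ≠ 0) (a : ℝ) :
    μ {ω | r ω = 0} + ENNReal.ofReal (exp (v * (a * c) ^ 2 / 2)) * μ {ω | r ω ^ 2 = c ^ 2} ≤
      ∫⁻ ω, ENNReal.ofReal (exp (a * r ω * g ω)) ∂μ := by
  rw [lintegral_exp_mul_of_indepFun_gaussianReal (hr.const_mul a) hg v hmap
    (hind.comp (measurable_const_mul a) measurable_id)]
  have hdisj : Disjoint {ω | r ω = 0} {ω | r ω ^ 2 = c ^ 2} := by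
    refine Set.disjoint_left.2 fun ω h0 hc2 ↦ hc ?_
    simp_all [eq_comm (a := (0 : ℝ))]
  simpa using le_lintegral_of_le_on_disjoint (μ := μ) (measurableSet_eq_fun hr measurable_const)
    (measurableSet_eq_fun (hr.pow_const 2) measurable_const) hdisj (a := 1)
    (f := fun ω ↦ ENNReal.ofReal (exp (v * (a * r ω) ^ 2 / 2)))
    (fun ω (h : r ω = 0) ↦ by simp [h])
    (fun ω (h : r ω ^ 2 = c ^ 2) ↦ by rw [mul_pow, mul_pow, h])

theorem mgf_comparison_scaled_bernoulli_gaussian : ∃ C : ℝ, 0 < C ∧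
    ∀ (Ω : Type) (_ : MeasurableSpace Ω) (μ : Measure Ω) (_ : IsProbabilityMeasure μ)
      (Z g r : Ω → ℝ) (K L : ℝ),
      Measurable Z → Measurable g → Measurable r →
      Integrable Z μ → (∫ ω, Z ω ∂μ) = 0 → (∫ ω, Z ω ^ 2 ∂μ) = 1 →
      psiNorm μ 2 Z ≤ ENNReal.ofReal K →
      0 ≤ L → L ^ 2 = K ^ 2 * Real.log K →
      Measure.map g μ = gaussianReal 0 1 →
      μ {ω | r ω ^ 2 = (2 * L) ^ 2} = ENNReal.ofReal (1 / (2 * L) ^ 2) →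
      μ {ω | r ω = 0} = 1 - ENNReal.ofReal (1 / (2 * L) ^ 2) →
      IndepFun r g μ →
      ∀ t : ℝ,
        (∫⁻ ω, ENNReal.ofReal (Real.exp (t * Z ω)) ∂μ) ≤
          ∫⁻ ω, ENNReal.ofReal (Real.exp (C * t * r ω * g ω)) ∂μ := by
  refine ⟨20, by norm_num, ?_⟩
  intro Ω _ μ _ Z g r K L hZ hg hr hZi hmean hsq hpsi _ hLK hmap hr2 hr0 hind t
  obtain ⟨s, hs, hsK, hb⟩ := exists_lintegral_exp_sq_div_sq_le_two_of_psiNorm_le hsq hpsi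
  have hL2 : 1 ≤ (2 * L) ^ 2 := one_le_sq_of_measure_eq_of_measure_eq hr2 hr0
  have hL : L ≠ 0 := by rintro rfl; norm_num at hL2
  have hΛ : 4 * s ^ 2 * log (4 * s ^ 2) ≤ 752 * L ^ 2 :=
    hLK ▸ four_mul_sq_mul_log_le hs hsK (by nlinarith)
  calc ∫⁻ ω, ENNReal.ofReal (exp (t * Z ω)) ∂μ
      ≤ ENNReal.ofReal (1 + 4 * t ^ 2 * exp (t ^ 2 * (4 * s ^ 2 * log (4 * s ^ 2)) / 2)) :=
        lintegral_exp_mul_le hZ hZi hmean hsq hs hb t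
    _ ≤ ENNReal.ofReal (1 + 4 * t ^ 2 * exp (376 * t ^ 2 * L ^ 2)) := by
        gcongr
        nlinarith [mul_le_mul_of_nonneg_left hΛ (sq_nonneg t)]
    _ ≤ ENNReal.ofReal
          (1 - 1 / (2 * L) ^ 2 + exp ((20 * t * (2 * L)) ^ 2 / 2) * (1 / (2 * L) ^ 2)) :=
        ENNReal.ofReal_le_ofReal (one_add_mul_sq_mul_exp_le hL (by norm_num) (by norm_num) t)
    _ = μ {ω | r ω = 0} + ENNReal.ofReal (exp ((1 : ℝ≥0) * (20 * t * (2 * L)) ^ 2 / 2)) *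
          μ {ω | r ω ^ 2 = (2 * L) ^ 2} := by
        rw [hr0, hr2, NNReal.coe_one, one_mul,
          ENNReal.ofReal_add (sub_nonneg.2 (div_le_one_of_le₀ hL2 (by positivity))) (by positivity),
          ENNReal.ofReal_sub _ (by positivity), ENNReal.ofReal_one,
          ENNReal.ofReal_mul (exp_pos _).le]
    _ ≤ ∫⁻ ω, ENNReal.ofReal (exp (20 * t * r ω * g ω)) ∂μ :=
        le_lintegral_exp_mul_mul_of_indepFun hr hg 1 hmap hind (by positivity) (20 * t)
end

section
/- Let D and D' be independent diagonal random n×n matrices with i.i.d. diagonal entries distributed Bernoulli(p), and let A be a fixed n×n matrix. Then for every η with 0 < η ≤ 1/‖A‖², E exp(η ‖D A D'‖_F²) ≤ exp(2 p η ‖A‖_F²). -/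
/-!
Since the masks are `0`/`1`-valued, `(dᵢ aᵢⱼ d'ⱼ)² ≤ dᵢ aᵢⱼ²`, so the exponent is at most
`∑ᵢ tᵢ dᵢ` with `tᵢ = η ‖Aᵢ‖²`, and `tᵢ ≤ η ‖A‖² ≤ 1` because a row is no longer than the operator
norm. The mask `D'` has disappeared, and by independence the expectation factors into Bernoulli
moment generating functions, each bounded by `1 + p (eᵗ - 1) ≤ exp (p (eᵗ - 1)) ≤ exp (2 p t)`
for `0 ≤ t ≤ 1`.
-/

open MeasureTheory ProbabilityTheory

/-- Frobenius norm squared of a matrix. -/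
noncomputable def frobSq {m n : ℕ} (A : Matrix (Fin m) (Fin n) ℝ) : ℝ :=
  ∑ i, ∑ j, A i j ^ 2

/-- The ℓ²→ℓ² operator norm of a matrix. -/
noncomputable def opNorm {m n : ℕ} (A : Matrix (Fin m) (Fin n) ℝ) : ℝ :=
  sSup {r : ℝ | ∃ x : Fin n → ℝ, (∑ j, x j ^ 2) ≤ 1 ∧
    r = Real.sqrt (∑ i, (∑ j, A i j * x j) ^ 2)}

open scoped ENNReal

section OpNorm

variable {m n : ℕ} (A : Matrix (Fin m) (Fin n) ℝ)

lemma opNorm_bddAbove :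
    BddAbove {r : ℝ | ∃ x : Fin n → ℝ, (∑ j, x j ^ 2) ≤ 1 ∧
      r = Real.sqrt (∑ i, (∑ j, A i j * x j) ^ 2)} := by
  refine ⟨Real.sqrt (frobSq A), ?_⟩
  rintro r ⟨x, hx, rfl⟩
  apply Real.sqrt_le_sqrt
  calc ∑ i, (∑ j, A i j * x j) ^ 2
      ≤ ∑ i, (∑ j, A i j ^ 2) * (∑ j, x j ^ 2) :=
        Finset.sum_le_sum fun i _ => Finset.sum_mul_sq_le_sq_mul_sq _ (A i) x
    _ ≤ ∑ i, (∑ j, A i j ^ 2) * 1 :=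
        Finset.sum_le_sum fun i _ => mul_le_mul_of_nonneg_left hx (by positivity)
    _ = frobSq A := by simp [frobSq]

lemma sq_mulVec_le_opNorm_sq {x : Fin n → ℝ} (hx : ∑ j, x j ^ 2 ≤ 1) (i : Fin m) :
    (∑ j, A i j * x j) ^ 2 ≤ opNorm A ^ 2 := by
  have hle : Real.sqrt (∑ k, (∑ j, A k j * x j) ^ 2) ≤ opNorm A :=
    le_csSup (opNorm_bddAbove A) ⟨x, hx, rfl⟩
  calc (∑ j, A i j * x j) ^ 2
      ≤ ∑ k, (∑ j, A k j * x j) ^ 2 :=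
        Finset.single_le_sum (f := fun k => (∑ j, A k j * x j) ^ 2)
          (fun _ _ => sq_nonneg _) (Finset.mem_univ i)
    _ = Real.sqrt (∑ k, (∑ j, A k j * x j) ^ 2) ^ 2 := (Real.sq_sqrt (by positivity)).symm
    _ ≤ opNorm A ^ 2 := pow_le_pow_left₀ (Real.sqrt_nonneg _) hle 2

lemma sum_sq_row_le_opNorm_sq (i : Fin m) : ∑ j, A i j ^ 2 ≤ opNorm A ^ 2 := by
  set r := ∑ j, A i j ^ 2 with hr
  rcases (show 0 ≤ r by positivity).eq_or_lt with hr0 | hr0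
  · rw [← hr0]
    positivity
  have hs : Real.sqrt r ≠ 0 := (Real.sqrt_pos.2 hr0).ne'
  have hunit : ∑ j, (A i j / Real.sqrt r) ^ 2 ≤ 1 := by
    simp_rw [div_pow, Real.sq_sqrt hr0.le]
    rw [← Finset.sum_div, ← hr, div_self hr0.ne']
  have hrow : ∑ j, A i j * (A i j / Real.sqrt r) = Real.sqrt r := by
    simp_rw [mul_div_assoc', ← sq]
    rw [← Finset.sum_div, ← hr, div_eq_iff hs, Real.mul_self_sqrt hr0.le]
  simpa [hrow, Real.sq_sqrt hr0.le] using sq_mulVec_le_opNorm_sq A hunit i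

end OpNorm

lemma sum_sum_sq_mul_mul_le {ι κ : Type*} [Fintype ι] [Fintype κ] (a : ι → κ → ℝ)
    {x : ι → ℝ} {y : κ → ℝ} (hx : ∀ i, x i = 0 ∨ x i = 1) (hy : ∀ j, y j = 0 ∨ y j = 1) :
    ∑ i, ∑ j, (x i * a i j * y j) ^ 2 ≤ ∑ i, (∑ j, a i j ^ 2) * x i := by
  refine Finset.sum_le_sum fun i _ => ?_
  rw [Finset.sum_mul]
  refine Finset.sum_le_sum fun j _ => ?_
  rcases hx i with h | h <;> rcases hy j with h' | h' <;> simp [h, h', sq_nonneg]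

section Bernoulli

variable {Ω : Type*} [MeasurableSpace Ω] {μ : Measure Ω} [IsProbabilityMeasure μ]

lemma ae_eq_zero_or_eq_one {X : Ω → ℝ} (hX : Measurable X) {q : ℝ≥0∞}
    (h1 : μ {ω | X ω = 1} = q) (h0 : μ {ω | X ω = 0} = 1 - q) :
    ∀ᵐ ω ∂μ, X ω = 0 ∨ X ω = 1 := by
  have hdisj : Disjoint {ω | X ω = 0} {ω | X ω = 1} :=
    Set.disjoint_left.2 fun _ h0 h1 => zero_ne_one (h0.symm.trans h1)
  have hS0 : MeasurableSet {ω | X ω = 0} := hX (measurableSet_singleton 0)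
  have hS1 : MeasurableSet {ω | X ω = 1} := hX (measurableSet_singleton 1)
  have hq : q ≤ 1 := h1 ▸ prob_le_one
  refine (ae_iff_measure_eq (p := fun ω => X ω = 0 ∨ X ω = 1)
    (hS0.union hS1).nullMeasurableSet).2 ?_
  rw [Set.ofPred_or, measure_union hdisj hS1, h0, h1, tsub_add_cancel_of_le hq, measure_univ]

lemma lintegral_exp_mul_le_of_bernoulli {X : Ω → ℝ} (hX : Measurable X)
    (hX01 : ∀ᵐ ω ∂μ, X ω = 0 ∨ X ω = 1) {p : ℝ} (hp : 0 ≤ p)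
    (h1 : μ {ω | X ω = 1} = ENNReal.ofReal p) {t : ℝ} (ht0 : 0 ≤ t) (ht1 : t ≤ 1) :
    ∫⁻ ω, ENNReal.ofReal (Real.exp (t * X ω)) ∂μ ≤ ENNReal.ofReal (Real.exp (2 * p * t)) := by
  have hS : MeasurableSet {ω | X ω = 1} := hX (measurableSet_singleton 1)
  have het : 0 ≤ Real.exp t - 1 := by linarith [Real.add_one_le_exp t]
  have het2 : Real.exp t - 1 ≤ 2 * t := by
    simpa [abs_of_nonneg ht0, abs_of_nonneg het] using
      Real.abs_exp_sub_one_le (x := t) (by rwa [abs_of_nonneg ht0])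
  have hsplit : (fun ω => ENNReal.ofReal (Real.exp (t * X ω))) =ᵐ[μ]
      fun ω => 1 + {ω | X ω = 1}.indicator (fun _ => ENNReal.ofReal (Real.exp t - 1)) ω := by
    have hexp : ENNReal.ofReal (Real.exp t) = 1 + ENNReal.ofReal (Real.exp t - 1) := by
      rw [← ENNReal.ofReal_one, ← ENNReal.ofReal_add zero_le_one het, add_sub_cancel]
    filter_upwards [hX01] with ω hω
    rcases hω with h | h <;> simp [h, hexp]
  calc ∫⁻ ω, ENNReal.ofReal (Real.exp (t * X ω)) ∂μ
      = 1 + ENNReal.ofReal (Real.exp t - 1) * ENNReal.ofReal p := by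
        rw [lintegral_congr_ae hsplit, lintegral_add_left measurable_const,
          lintegral_indicator_const hS, h1, lintegral_const, measure_univ, one_mul]
    _ = ENNReal.ofReal ((Real.exp t - 1) * p + 1) := by
        rw [ENNReal.ofReal_add (by positivity) zero_le_one, ENNReal.ofReal_mul het,
          ENNReal.ofReal_one, add_comm]
    _ ≤ ENNReal.ofReal (Real.exp ((Real.exp t - 1) * p)) :=
        ENNReal.ofReal_le_ofReal (Real.add_one_le_exp _)
    _ ≤ ENNReal.ofReal (Real.exp (2 * p * t)) :=
        ENNReal.ofReal_le_ofReal
          (Real.exp_le_exp.2 (by linarith [mul_le_mul_of_nonneg_right het2 hp]))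

lemma lintegral_exp_sum_mul_le_of_iIndepFun {ι : Type*} [Fintype ι] {d : ι → Ω → ℝ}
    (hind : iIndepFun d μ) (hd : ∀ i, Measurable (d i))
    (hd01 : ∀ i, ∀ᵐ ω ∂μ, d i ω = 0 ∨ d i ω = 1) {p : ℝ} (hp : 0 ≤ p)
    (h1 : ∀ i, μ {ω | d i ω = 1} = ENNReal.ofReal p) {t : ι → ℝ} (ht0 : ∀ i, 0 ≤ t i)
    (ht1 : ∀ i, t i ≤ 1) :
    ∫⁻ ω, ENNReal.ofReal (Real.exp (∑ i, t i * d i ω)) ∂μ ≤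
      ENNReal.ofReal (Real.exp (2 * p * ∑ i, t i)) := by
  have hmeas : ∀ i, Measurable fun x : ℝ => ENNReal.ofReal (Real.exp (t i * x)) :=
    fun _ => by fun_prop
  calc ∫⁻ ω, ENNReal.ofReal (Real.exp (∑ i, t i * d i ω)) ∂μ
      = ∫⁻ ω, ∏ i, ENNReal.ofReal (Real.exp (t i * d i ω)) ∂μ := by
        simp_rw [Real.exp_sum, ENNReal.ofReal_prod_of_nonneg fun _ _ => (Real.exp_pos _).le]
    _ = ∏ i, ∫⁻ ω, ENNReal.ofReal (Real.exp (t i * d i ω)) ∂μ :=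
        lintegral_prod_eq_prod_lintegral_of_indepFun _ _ (hind.comp _ hmeas)
          fun i => (hmeas i).comp (hd i)
    _ ≤ ∏ i, ENNReal.ofReal (Real.exp (2 * p * t i)) :=
        Finset.prod_le_prod' fun i _ =>
          lintegral_exp_mul_le_of_bernoulli (hd i) (hd01 i) hp (h1 i) (ht0 i) (ht1 i)
    _ = ENNReal.ofReal (Real.exp (2 * p * ∑ i, t i)) := by
        rw [← ENNReal.ofReal_prod_of_nonneg fun _ _ => (Real.exp_pos _).le, ← Real.exp_sum,
          Finset.mul_sum]

end Bernoulli

theorem mgf_frobenius_bernoulli_mask_general {Ω : Type*} [MeasurableSpace Ω] (μ : Measure Ω)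
    [IsProbabilityMeasure μ] (n : ℕ) (A : Matrix (Fin n) (Fin n) ℝ) (p : ℝ)
    (hp0 : 0 ≤ p) (d d' : Fin n → Ω → ℝ)
    (hd : ∀ i, Measurable (d i)) (hd' : ∀ i, Measurable (d' i))
    (hind : iIndepFun (Sum.elim d d') μ)
    (hd1 : ∀ i, μ {ω | d i ω = 1} = ENNReal.ofReal p)
    (hd0 : ∀ i, μ {ω | d i ω = 0} = 1 - ENNReal.ofReal p)
    (hd'1 : ∀ i, μ {ω | d' i ω = 1} = ENNReal.ofReal p)
    (hd'0 : ∀ i, μ {ω | d' i ω = 0} = 1 - ENNReal.ofReal p)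
    (η : ℝ) (hη0 : 0 < η) (hη1 : η ≤ 1 / opNorm A ^ 2) :
    (∫⁻ ω, ENNReal.ofReal (Real.exp (η * ∑ i, ∑ j, (d i ω * A i j * d' j ω) ^ 2)) ∂μ) ≤
      ENNReal.ofReal (Real.exp (2 * p * η * frobSq A)) := by
  have hA : 0 < opNorm A ^ 2 := by
    refine (sq_nonneg _).lt_of_ne fun h => ?_
    rw [← h, div_zero] at hη1
    linarith
  have ht1 : ∀ i, η * ∑ j, A i j ^ 2 ≤ 1 := fun i =>
    (mul_le_mul_of_nonneg_left (sum_sq_row_le_opNorm_sq A i) hη0.le).trans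
      ((le_div_iff₀ hA).1 hη1)
  have hd01 := fun i => ae_eq_zero_or_eq_one (hd i) (hd1 i) (hd0 i)
  have hd'01 := fun j => ae_eq_zero_or_eq_one (hd' j) (hd'1 j) (hd'0 j)
  calc (∫⁻ ω, ENNReal.ofReal (Real.exp (η * ∑ i, ∑ j, (d i ω * A i j * d' j ω) ^ 2)) ∂μ)
      ≤ ∫⁻ ω, ENNReal.ofReal (Real.exp (∑ i, (η * ∑ j, A i j ^ 2) * d i ω)) ∂μ := by
        refine lintegral_mono_ae ?_
        filter_upwards [ae_all_iff.2 hd01, ae_all_iff.2 hd'01] with ω hω hω'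
        refine ENNReal.ofReal_le_ofReal (Real.exp_le_exp.2 ?_)
        calc η * ∑ i, ∑ j, (d i ω * A i j * d' j ω) ^ 2
            ≤ η * ∑ i, (∑ j, A i j ^ 2) * d i ω :=
              mul_le_mul_of_nonneg_left (sum_sum_sq_mul_mul_le A hω hω') hη0.le
          _ = ∑ i, (η * ∑ j, A i j ^ 2) * d i ω := by
              rw [Finset.mul_sum]
              exact Finset.sum_congr rfl fun _ _ => (mul_assoc _ _ _).symm
    _ ≤ ENNReal.ofReal (Real.exp (2 * p * ∑ i, η * ∑ j, A i j ^ 2)) :=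
        lintegral_exp_sum_mul_le_of_iIndepFun (hind.precomp Sum.inl_injective) hd hd01 hp0 hd1
          (fun _ => by positivity) ht1
    _ = ENNReal.ofReal (Real.exp (2 * p * η * frobSq A)) := by
        rw [← Finset.mul_sum, frobSq, ← mul_assoc]

theorem mgf_frobenius_bernoulli_mask {Ω : Type*} [MeasurableSpace Ω] (μ : Measure Ω)
    [IsProbabilityMeasure μ] (n : ℕ) (A : Matrix (Fin n) (Fin n) ℝ) (p : ℝ)
    (hp0 : 0 ≤ p) (hp1 : p ≤ 1) (d d' : Fin n → Ω → ℝ)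
    (hd : ∀ i, Measurable (d i)) (hd' : ∀ i, Measurable (d' i))
    (hind : iIndepFun (Sum.elim d d') μ)
    (hd1 : ∀ i, μ {ω | d i ω = 1} = ENNReal.ofReal p)
    (hd0 : ∀ i, μ {ω | d i ω = 0} = 1 - ENNReal.ofReal p)
    (hd'1 : ∀ i, μ {ω | d' i ω = 1} = ENNReal.ofReal p)
    (hd'0 : ∀ i, μ {ω | d' i ω = 0} = 1 - ENNReal.ofReal p)
    (η : ℝ) (hη0 : 0 < η) (hη1 : η ≤ 1 / opNorm A ^ 2) :
    (∫⁻ ω, ENNReal.ofReal (Real.exp (η * ∑ i, ∑ j, (d i ω * A i j * d' j ω) ^ 2)) ∂μ) ≤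
      ENNReal.ofReal (Real.exp (2 * p * η * frobSq A)) :=
  mgf_frobenius_bernoulli_mask_general μ n A p hp0 d d' hd hd' hind hd1 hd0 hd'1 hd'0 η hη0 hη1
end

section
/- Let p ∈ (0,1) and let X be the centered normalized Bernoulli variable taking value √((1−p)/p) with probability p and −√(p/(1−p)) with probability 1−p. Let K be the real number with K² log K = 1/(p(1−p)). If p(1−p) ≤ 1/4, then E exp(X²/K²) < 2, i.e. ‖X‖_{ψ₂} ≤ K. -/
open MeasureTheory ProbabilityTheory

/-!
The defining equation `K² log K = 1 / (p(1-p))` turns the two values of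
`exp (X² / K²)` into `K ^ (1-p)²` and `K ^ p²`. Since `t ↦ K ^ t` is convex, `K ^ t ≤ 1 + t (K-1)`
on `[0, 1]`, so `E exp (X² / K²) ≤ 1 + p(1-p)(K-1)`, and this is `< 2` because
`K - 1 < K (K - 1) ≤ K² log K = 1 / (p(1-p))`.
-/

lemma Real.sub_one_lt_sq_mul_log {K : ℝ} (hK : 1 < K) : K - 1 < K ^ 2 * Real.log K := by
  have hlog := Real.one_sub_inv_le_log_of_pos (zero_lt_one.trans hK)
  calc K - 1 < K * (K - 1) := by nlinarith
    _ = K ^ 2 * (1 - K⁻¹) := by field_simp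
    _ ≤ K ^ 2 * Real.log K := by gcongr

lemma bernoulli_mixture_rpow_le {p K : ℝ} (hp0 : 0 ≤ p) (hp1 : p ≤ 1) (hK : 0 ≤ K) :
    p * K ^ ((1 - p) ^ 2) + (1 - p) * K ^ (p ^ 2) ≤ 1 + p * (1 - p) * (K - 1) := by
  have chord : ∀ t : ℝ, 0 ≤ t → t ≤ 1 → K ^ t ≤ 1 + t * (K - 1) := fun t ht0 ht1 => by
    simpa using rpow_one_add_le_one_add_mul_self (s := K - 1) (by linarith) ht0 ht1
  have h1 := chord ((1 - p) ^ 2) (by positivity) (by nlinarith)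
  have h2 := chord (p ^ 2) (by positivity) (by nlinarith)
  nlinarith [mul_le_mul_of_nonneg_left h1 hp0, mul_le_mul_of_nonneg_left h2 (sub_nonneg.2 hp1)]

lemma centered_bernoulli_exp_sum_lt_two {p K : ℝ} (hp0 : 0 < p) (hp1 : p < 1) (hK1 : 1 ≤ K)
    (hK : K ^ 2 * Real.log K = 1 / (p * (1 - p))) :
    p * Real.exp ((1 - p) / p / K ^ 2) + (1 - p) * Real.exp (p / (1 - p) / K ^ 2) < 2 := by
  have hq : 0 < 1 - p := by linarith
  have hc : 0 < p * (1 - p) := mul_pos hp0 hq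
  have hK0 : 0 < K := zero_lt_one.trans_le hK1
  have hK1' : 1 < K := by
    refine hK1.lt_of_ne ?_
    rintro rfl
    simp only [Real.log_one, mul_zero] at hK
    exact (one_div_pos.2 hc).ne hK
  have hlog : Real.log K = 1 / (p * (1 - p) * K ^ 2) := by
    field_simp at hK ⊢
    linarith
  have e1 : (1 - p) / p / K ^ 2 = Real.log K * (1 - p) ^ 2 := by rw [hlog]; field_simp
  have e2 : p / (1 - p) / K ^ 2 = Real.log K * p ^ 2 := by rw [hlog]; field_simp
  have hgap : p * (1 - p) * (K - 1) < 1 := by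
    have h := Real.sub_one_lt_sq_mul_log hK1'
    rw [hK, lt_div_iff₀ hc] at h
    linarith
  calc _ = p * K ^ ((1 - p) ^ 2) + (1 - p) * K ^ (p ^ 2) := by
        rw [Real.rpow_def_of_pos hK0, Real.rpow_def_of_pos hK0, e1, e2]
    _ ≤ 1 + p * (1 - p) * (K - 1) := bernoulli_mixture_rpow_le hp0.le hp1.le hK0.le
    _ < 2 := by linarith

lemma lintegral_comp_eq_of_two_point {Ω α : Type*} [MeasurableSpace Ω] [MeasurableSpace α]
    [MeasurableSingletonClass α] {μ : Measure Ω} [IsProbabilityMeasure μ] {X : Ω → α}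
    (hX : Measurable X) {a b : α} (hab : a ≠ b)
    (hmass : μ {ω | X ω = a} + μ {ω | X ω = b} = 1) (g : α → ENNReal) :
    ∫⁻ ω, g (X ω) ∂μ = g a * μ {ω | X ω = a} + g b * μ {ω | X ω = b} := by
  have hA : MeasurableSet {ω | X ω = a} := hX (measurableSet_singleton a)
  have hB : MeasurableSet {ω | X ω = b} := hX (measurableSet_singleton b)
  have hdisj : Disjoint {ω | X ω = a} {ω | X ω = b} :=
    Set.disjoint_left.2 fun ω ha hb => hab (ha.symm.trans hb)
  have hfull : ∀ᵐ ω ∂μ, ω ∈ {ω | X ω = a} ∪ {ω | X ω = b} := by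
    rw [ae_mem_iff_measure_eq (hA.union hB).nullMeasurableSet, measure_union hdisj hB, hmass,
      measure_univ]
  have hrestrict : ∫⁻ ω, g (X ω) ∂μ = ∫⁻ ω in {ω | X ω = a} ∪ {ω | X ω = b}, g (X ω) ∂μ := by
    rw [Measure.restrict_eq_self_of_ae_mem hfull]
  rw [hrestrict, lintegral_union hB hdisj,
    setLIntegral_congr_fun hA fun ω (h : X ω = a) => by rw [h],
    setLIntegral_congr_fun hB fun ω (h : X ω = b) => by rw [h],
    setLIntegral_const, setLIntegral_const]

lemma psiNorm_two_le_of_lintegral_le {Ω : Type*} [MeasurableSpace Ω] {μ : Measure Ω}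
    {X : Ω → ℝ} {s : ℝ} (hs : 0 < s)
    (h : ∫⁻ ω, ENNReal.ofReal (Real.exp (X ω ^ 2 / s ^ 2)) ∂μ ≤ 2) :
    psiNorm μ 2 X ≤ ENNReal.ofReal s := by
  refine sInf_le ⟨s, hs, rfl, ?_⟩
  have hsq : ∀ x : ℝ, |x| ^ (2 : ℝ) = x ^ 2 := fun x => by
    rw [Real.rpow_two, sq_abs]
  simpa only [hsq, Real.rpow_two] using h

theorem centered_bernoulli_psi2_general {Ω : Type*} [MeasurableSpace Ω] (μ : Measure Ω)
    [IsProbabilityMeasure μ] (p K : ℝ) (hp0 : 0 < p) (hp1 : p < 1)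
    (hK1 : 1 ≤ K)
    (hK : K ^ 2 * Real.log K = 1 / (p * (1 - p)))
    (X : Ω → ℝ) (hX : Measurable X)
    (hXp : μ {ω | X ω = Real.sqrt ((1 - p) / p)} = ENNReal.ofReal p)
    (hXq : μ {ω | X ω = -Real.sqrt (p / (1 - p))} = ENNReal.ofReal (1 - p)) :
    (∫⁻ ω, ENNReal.ofReal (Real.exp (X ω ^ 2 / K ^ 2)) ∂μ) < 2 ∧
    psiNorm μ 2 X ≤ ENNReal.ofReal K := by
  have hq : 0 < 1 - p := by linarith
  have hab : Real.sqrt ((1 - p) / p) ≠ -Real.sqrt (p / (1 - p)) := by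
    have : 0 < Real.sqrt ((1 - p) / p) := Real.sqrt_pos.2 (by positivity)
    linarith [Real.sqrt_nonneg (p / (1 - p))]
  have hmass : μ {ω | X ω = Real.sqrt ((1 - p) / p)} +
      μ {ω | X ω = -Real.sqrt (p / (1 - p))} = 1 := by
    rw [hXp, hXq, ← ENNReal.ofReal_add hp0.le hq.le]
    simp
  have hmoment : ∫⁻ ω, ENNReal.ofReal (Real.exp (X ω ^ 2 / K ^ 2)) ∂μ =
      ENNReal.ofReal (p * Real.exp ((1 - p) / p / K ^ 2) +
        (1 - p) * Real.exp (p / (1 - p) / K ^ 2)) := by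
    rw [lintegral_comp_eq_of_two_point hX hab hmass
      (fun x => ENNReal.ofReal (Real.exp (x ^ 2 / K ^ 2))), hXp, hXq, neg_sq,
      Real.sq_sqrt (by positivity), Real.sq_sqrt (by positivity),
      ENNReal.ofReal_add (by positivity) (by positivity), ENNReal.ofReal_mul hp0.le,
      ENNReal.ofReal_mul hq.le, mul_comm, mul_comm (ENNReal.ofReal (Real.exp _))]
  have hlt : ∫⁻ ω, ENNReal.ofReal (Real.exp (X ω ^ 2 / K ^ 2)) ∂μ < 2 := by
    rw [hmoment, ← ENNReal.ofReal_ofNat 2, ENNReal.ofReal_lt_ofReal_iff two_pos]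
    exact centered_bernoulli_exp_sum_lt_two hp0 hp1 hK1 hK
  exact ⟨hlt, psiNorm_two_le_of_lintegral_le (zero_lt_one.trans_le hK1) hlt.le⟩

theorem centered_bernoulli_psi2 {Ω : Type*} [MeasurableSpace Ω] (μ : Measure Ω)
    [IsProbabilityMeasure μ] (p K : ℝ) (hp0 : 0 < p) (hp1 : p < 1)
    (hpq : p * (1 - p) ≤ 1 / 4) (hK1 : 1 ≤ K)
    (hK : K ^ 2 * Real.log K = 1 / (p * (1 - p)))
    (X : Ω → ℝ) (hX : Measurable X)
    (hXp : μ {ω | X ω = Real.sqrt ((1 - p) / p)} = ENNReal.ofReal p)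
    (hXq : μ {ω | X ω = -Real.sqrt (p / (1 - p))} = ENNReal.ofReal (1 - p)) :
    (∫⁻ ω, ENNReal.ofReal (Real.exp (X ω ^ 2 / K ^ 2)) ∂μ) < 2 ∧
    psiNorm μ 2 X ≤ ENNReal.ofReal K :=
  centered_bernoulli_psi2_general μ p K hp0 hp1 hK1 hK X hX hXp hXq
end

section
/- (Tightness example) Let K ≥ 4 and X = (X₁,…,X_m) a random vector with independent coordinates such that X_i²/(K² log K) ~ Bernoulli(1/(K² log K)). Then each ‖X_i‖_{ψ₂} ≤ K, and if m ≥ K² log K, then ‖ ‖X‖₂ − √m ‖_{ψ₂} ≥ c K √(log K) for an absolute constant c > 1/5 (one may take c = 1/√(10 log 10)). -/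
open MeasureTheory ProbabilityTheory

/-!
Each `X i` vanishes except with probability `p = 1 / (K² log K)`, when `X i ^ 2 / K² = log K`;
hence `E exp (X i ^ 2 / K²) ≤ K p + 1 ≤ 2`. For the lower bound, all coordinates vanish at once
with probability `(1 - p) ^ m ≥ exp (-2 p m)`, and there `‖X‖₂ - √m = -√m`. So every admissible
`s` in the definition of the ψ₂ norm satisfies `exp (m / s² - 2 p m) ≤ 2`, which fails as soon as
`s² < K² log K / (10 log 10)`, because `m ≥ K² log K` makes `p m ≥ 1`.
-/

open Real

theorem Real.exp_neg_two_mul_le_one_sub {p : ℝ} (hp0 : 0 ≤ p) (hp : p ≤ 1 / 2) :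
    exp (-(2 * p)) ≤ 1 - p := by
  have h1 : 1 + 2 * p ≤ exp (2 * p) := by linarith [add_one_le_exp (2 * p)]
  have h2 : exp (-(2 * p)) * exp (2 * p) = 1 := by rw [← exp_add, neg_add_cancel, exp_zero]
  nlinarith [exp_pos (-(2 * p))]

theorem Real.two_lt_exp_mul_one_sub_pow {p x : ℝ} {m : ℕ} (hp0 : 0 ≤ p) (hp : p ≤ 1 / 2)
    (h : 1 + 2 * p * m ≤ x) : 2 < exp x * (1 - p) ^ m :=
  calc 2 < exp 1 := by linarith [add_one_lt_exp one_ne_zero]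
    _ ≤ exp (x - 2 * p * m) := exp_le_exp.mpr (by linarith)
    _ = exp x * exp (-(2 * p)) ^ m := by rw [← exp_nat_mul, ← exp_add]; ring_nf
    _ ≤ exp x * (1 - p) ^ m := by
        gcongr
        exact exp_neg_two_mul_le_one_sub hp0 hp

theorem Real.log_ten_lt_five_div_two : log 10 < 5 / 2 := by
  have h : (2.7 : ℝ) ^ 5 < exp (5 / 2) ^ 2 := by
    rw [← exp_nat_mul, show ((2 : ℕ) : ℝ) * (5 / 2) = ((5 : ℕ) : ℝ) * 1 by norm_num, exp_nat_mul]
    gcongr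
    linarith [exp_one_gt_d9]
  rw [log_lt_iff_lt_exp (by norm_num)]
  exact lt_of_pow_lt_pow_left₀ 2 (exp_pos _).le (by linarith)

theorem Real.sqrt_ten_mul_log_ten_lt_five : √(10 * log 10) < 5 := by
  rw [sqrt_lt' (by norm_num)]
  linarith [log_ten_lt_five_div_two]

section PsiNorm

variable {Ω : Type*} [MeasurableSpace Ω] {μ : Measure Ω}

theorem psiNorm_le_ofReal {α s : ℝ} {X : Ω → ℝ} (hs : 0 < s)
    (h : ∫⁻ ω, ENNReal.ofReal (exp (|X ω| ^ α / s ^ α)) ∂μ ≤ 2) :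
    psiNorm μ α X ≤ ENNReal.ofReal s :=
  sInf_le ⟨s, hs, rfl, h⟩

theorem ofReal_le_psiNorm {α t : ℝ} {X : Ω → ℝ}
    (h : ∀ s, 0 < s → s < t → 2 < ∫⁻ ω, ENNReal.ofReal (exp (|X ω| ^ α / s ^ α)) ∂μ) :
    ENNReal.ofReal t ≤ psiNorm μ α X := by
  refine le_sInf ?_
  rintro _ ⟨s, hs, rfl, hint⟩
  by_contra! hst
  exact (h s hs ((ENNReal.ofReal_lt_ofReal_iff'.mp hst).1)).not_ge hint

theorem ofReal_exp_mul_measure_le_lintegral {α a s : ℝ} {X : Ω → ℝ} {E : Set Ω}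
    (hα : 0 ≤ α) (ha : 0 ≤ a) (hs : 0 ≤ s) (hE : MeasurableSet E)
    (haE : ∀ ω ∈ E, a ≤ |X ω|) :
    ENNReal.ofReal (exp (a ^ α / s ^ α)) * μ E ≤
      ∫⁻ ω, ENNReal.ofReal (exp (|X ω| ^ α / s ^ α)) ∂μ := by
  rw [← lintegral_indicator_const hE]
  refine lintegral_mono fun ω => ?_
  by_cases hω : ω ∈ E
  · rw [Set.indicator_of_mem hω]
    gcongr
    exact haE ω hω
  · rw [Set.indicator_of_notMem hω]
    exact bot_le

theorem ae_sq_eq_or_eq_zero [IsProbabilityMeasure μ] {X : Ω → ℝ} (hX : Measurable X) {v : ℝ}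
    (hv : v ≠ 0) (h : μ {ω | X ω ^ 2 = v} + μ {ω | X ω = 0} = 1) :
    ∀ᵐ ω ∂μ, X ω ^ 2 = v ∨ X ω = 0 := by
  have hv_meas : MeasurableSet {ω | X ω ^ 2 = v} := (hX.pow_const 2) (measurableSet_singleton v)
  have h0_meas : MeasurableSet {ω | X ω = 0} := hX (measurableSet_singleton 0)
  have hdisj : Disjoint {ω | X ω ^ 2 = v} {ω | X ω = 0} := by
    refine Set.disjoint_left.mpr fun ω hsq hzero => hv ?_
    simp_all
  rw [← measure_union hdisj h0_meas, ← mem_ae_iff_prob_eq_one (hv_meas.union h0_meas)] at h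
  exact h

theorem lintegral_exp_sq_div_le {X : Ω → ℝ} (hX : Measurable X) {v s : ℝ}
    (hX2 : ∀ᵐ ω ∂μ, X ω ^ 2 = v ∨ X ω = 0) :
    ∫⁻ ω, ENNReal.ofReal (exp (|X ω| ^ (2 : ℝ) / s ^ (2 : ℝ))) ∂μ ≤
      ENNReal.ofReal (exp (v / s ^ 2)) * μ {ω | X ω ^ 2 = v} + μ Set.univ := by
  have hv_meas : MeasurableSet {ω | X ω ^ 2 = v} := (hX.pow_const 2) (measurableSet_singleton v)
  calc ∫⁻ ω, ENNReal.ofReal (exp (|X ω| ^ (2 : ℝ) / s ^ (2 : ℝ))) ∂μ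
      ≤ ∫⁻ ω, ({ω | X ω ^ 2 = v}.indicator (fun _ => ENNReal.ofReal (exp (v / s ^ 2))) ω + 1)
          ∂μ := by
        refine lintegral_mono_ae (hX2.mono fun ω hω => ?_)
        simp only [rpow_two, sq_abs]
        rcases hω with hsq | hzero
        · rw [Set.indicator_of_mem (show ω ∈ {ω | X ω ^ 2 = v} from hsq), hsq]
          exact le_self_add
        · simp [hzero]
    _ = ENNReal.ofReal (exp (v / s ^ 2)) * μ {ω | X ω ^ 2 = v} + μ Set.univ := by
        rw [lintegral_add_right _ measurable_const, lintegral_indicator_const hv_meas,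
          lintegral_const, one_mul]

theorem psiNorm_two_le_of_ae_sq_eq_or_eq_zero [IsProbabilityMeasure μ] {X : Ω → ℝ}
    (hX : Measurable X) {v s : ℝ} (hs : 0 < s) (hX2 : ∀ᵐ ω ∂μ, X ω ^ 2 = v ∨ X ω = 0)
    (hv : ENNReal.ofReal (exp (v / s ^ 2)) * μ {ω | X ω ^ 2 = v} ≤ 1) :
    psiNorm μ 2 X ≤ ENNReal.ofReal s := by
  refine psiNorm_le_ofReal hs ((lintegral_exp_sq_div_le hX hX2).trans ?_)
  rw [measure_univ]
  exact (add_le_add hv le_rfl).trans_eq one_add_one_eq_two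

end PsiNorm

section Deviation

variable {Ω : Type*} [MeasurableSpace Ω] {μ : Measure Ω} {ι : Type*} [Fintype ι]
  {X : ι → Ω → ℝ}

theorem ProbabilityTheory.iIndepFun.measure_forall_eq_zero (hind : iIndepFun X μ) :
    μ {ω | ∀ i, X i ω = 0} = ∏ i, μ {ω | X i ω = 0} := by
  have := hind.measure_inter_preimage_eq_mul Finset.univ (sets := fun _ => {0})
    (fun _ _ => measurableSet_singleton 0)
  simpa [Set.preimage, Set.ofPred_forall] using this

theorem ofReal_le_psiNorm_sqrt_sum_sq_sub_sqrt [IsProbabilityMeasure μ]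
    (hX : ∀ i, Measurable (X i)) (hind : iIndepFun X μ) {p : ℝ} (hp0 : 0 ≤ p) (hp : p ≤ 1 / 2)
    (hX0 : ∀ i, μ {ω | X i ω = 0} = 1 - ENNReal.ofReal p) {t : ℝ}
    (hpt : 1 + 2 * p * Fintype.card ι ≤ Fintype.card ι / t ^ 2) :
    ENNReal.ofReal t ≤ psiNorm μ 2 (fun ω => √(∑ i, X i ω ^ 2) - √(Fintype.card ι)) := by
  set n : ℕ := Fintype.card ι
  set E := {ω | ∀ i, X i ω = 0}
  have hE_meas : MeasurableSet E := by
    simp only [E, Set.ofPred_forall]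
    exact MeasurableSet.iInter fun i => hX i (measurableSet_singleton 0)
  have hE : μ E = ENNReal.ofReal ((1 - p) ^ n) := by
    rw [hind.measure_forall_eq_zero, Finset.prod_congr rfl fun i _ => hX0 i, Finset.prod_const,
      Finset.card_univ, ENNReal.ofReal_pow (by linarith), ENNReal.ofReal_sub _ hp0,
      ENNReal.ofReal_one]
  have hdev : ∀ ω ∈ E, √n ≤ |√(∑ i, X i ω ^ 2) - √n| := fun ω hω => by
    simp [show ∀ i, X i ω = 0 from hω, le_abs_self]
  refine ofReal_le_psiNorm fun s hs hst => ?_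
  have hns : 1 + 2 * p * n ≤ n / s ^ 2 :=
    hpt.trans (div_le_div_of_nonneg_left n.cast_nonneg (by positivity) (by gcongr))
  calc (2 : ENNReal) < ENNReal.ofReal (exp (n / s ^ 2) * (1 - p) ^ n) := by
        rw [← ENNReal.ofReal_ofNat 2, ENNReal.ofReal_lt_ofReal_iff_of_nonneg zero_le_two]
        exact two_lt_exp_mul_one_sub_pow hp0 hp hns
    _ = ENNReal.ofReal (exp (√n ^ (2 : ℝ) / s ^ (2 : ℝ))) * μ E := by
        rw [hE, ← ENNReal.ofReal_mul (exp_pos _).le, rpow_two, rpow_two,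
          sq_sqrt n.cast_nonneg]
    _ ≤ _ := ofReal_exp_mul_measure_le_lintegral zero_le_two (sqrt_nonneg _) hs.le hE_meas hdev

end Deviation

theorem tightness_example {Ω : Type*} [MeasurableSpace Ω] (μ : Measure Ω)
    [IsProbabilityMeasure μ] (m : ℕ) (K : ℝ) (hK : 4 ≤ K)
    (X : Fin m → Ω → ℝ) (hX : ∀ i, Measurable (X i))
    (hind : iIndepFun X μ)
    (hXv : ∀ i, μ {ω | X i ω ^ 2 = K ^ 2 * Real.log K} =
      ENNReal.ofReal (1 / (K ^ 2 * Real.log K)))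
    (hX0 : ∀ i, μ {ω | X i ω = 0} = 1 - ENNReal.ofReal (1 / (K ^ 2 * Real.log K))) :
    (∀ i, psiNorm μ 2 (X i) ≤ ENNReal.ofReal K) ∧
    (1 / 5 : ℝ) < 1 / Real.sqrt (10 * Real.log 10) ∧
    (K ^ 2 * Real.log K ≤ m →
      ENNReal.ofReal (1 / Real.sqrt (10 * Real.log 10) * (K * Real.sqrt (Real.log K))) ≤
        psiNorm μ 2 (fun ω => Real.sqrt (∑ i, X i ω ^ 2) - Real.sqrt m)) := by
  have hK0 : 0 < K := by linarith
  have hlogK : 1 < log K := (lt_log_iff_exp_lt hK0).mpr (by linarith [exp_one_lt_d9])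
  have hlog10 : 1 < log 10 := (lt_log_iff_exp_lt (by norm_num)).mpr (by linarith [exp_one_lt_d9])
  set L := K ^ 2 * log K with hL_def
  have hKL : K ≤ L := by nlinarith
  have hL : 2 ≤ L := by linarith
  have hp0 : 0 ≤ 1 / L := by positivity
  have hp : 1 / L ≤ 1 / 2 := one_div_le_one_div_of_le two_pos hL
  refine ⟨fun i => ?_, ?_, fun hm => ?_⟩
  · have hX2 := ae_sq_eq_or_eq_zero (hX i) (by positivity : L ≠ 0) (by
      rw [hXv i, hX0 i]
      exact add_tsub_cancel_of_le (ENNReal.ofReal_le_one.mpr (by linarith)))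
    refine psiNorm_two_le_of_ae_sq_eq_or_eq_zero (hX i) hK0 hX2 ?_
    rw [hXv i, show L / K ^ 2 = log K by rw [hL_def]; field_simp, exp_log hK0,
      ← ENNReal.ofReal_mul hK0.le, ENNReal.ofReal_le_one, mul_one_div, div_le_one (by positivity)]
    exact hKL
  · exact one_div_lt_one_div_of_lt (by positivity) sqrt_ten_mul_log_ten_lt_five
  · set t := 1 / √(10 * log 10) * (K * √(log K))
    have ht : t ^ 2 = L / (10 * log 10) := by
      rw [mul_pow, mul_pow, div_pow, one_pow, sq_sqrt (by positivity), sq_sqrt (by positivity)]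
      ring
    have hmL : 1 ≤ m / L := (one_le_div (by positivity)).mpr hm
    have hpt : 1 + 2 * (1 / L) * m ≤ m / t ^ 2 :=
      calc 1 + 2 * (1 / L) * m = 1 + 2 * (m / L) := by ring
        _ ≤ 10 * (m / L) := by linarith
        _ ≤ 10 * log 10 * (m / L) := by gcongr; linarith
        _ = m / t ^ 2 := by rw [ht]; field_simp
    simpa only [Fintype.card_fin] using ofReal_le_psiNorm_sqrt_sum_sq_sub_sqrt hX hind hp0 hp hX0
      (by simpa only [Fintype.card_fin] using hpt)
end
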